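/- arXiv:2512.20247 — 5 statements merged into one kernel-verified Lean document; each statement's English description precedes it below -/
import Mathlib

section
/- Let H ⊆ C_b(Ω) be a reproducing kernel Hilbert space of bounded continuous functions on Ω whose kernel k is bounded (sup_{x∈Ω} k(x,x) < ∞), and assume H is invariant under the Koopman operator, i.e., Kf ∈ H for every f ∈ H. Then K : H → H is a bounded (equivalently, closed) linear operator. -/
open MeasureTheory ProbabilityTheory Filter Topology
open scoped RealInnerProductSpace

/-!
Both linearity and boundedness of `K` are read off through the point evaluations
`f ↦ ⟪Φ x, f⟫ = f x`, which separate `H`. Composed with `K` they become the functionals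
`f ↦ ∫_Ω f dρ_x`. Since `|f y| ≤ √k(y,y) ‖f‖ ≤ √M ‖f‖`, every `f ∈ H` is bounded (and
continuous), hence integrable, on `Ω`, so these functionals are linear and bounded by `√M ‖f‖`.
A linear map whose compositions with a separating family of continuous functionals are all
continuous has a closed graph, hence is bounded.
-/

theorem isLinearMap_of_separating_comp {R M N ι : Type*} [CommRing R] [AddCommGroup M]
    [Module R M] [AddCommGroup N] [Module R N] (φ : ι → M →ₗ[R] N)
    (hφ : ∀ v, (∀ i, φ i v = 0) → v = 0) {T : M → M} (A : ι → M →ₗ[R] N)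
    (hT : ∀ i f, φ i (T f) = A i f) : IsLinearMap R T where
  map_add f g := sub_eq_zero.mp <| hφ _ fun i => by
    rw [map_sub, map_add, hT, hT, hT, map_add, sub_self]
  map_smul c f := sub_eq_zero.mp <| hφ _ fun i => by
    rw [map_sub, map_smul, hT, hT, map_smul, sub_self]

theorem LinearMap.continuous_of_separating_continuous_comp {𝕜 E F ι : Type*}
    [NontriviallyNormedField 𝕜] [NormedAddCommGroup E] [NormedSpace 𝕜 E] [CompleteSpace E]
    [NormedAddCommGroup F] [NormedSpace 𝕜 F] [CompleteSpace F] (T : E →ₗ[𝕜] F)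
    (φ : ι → F →L[𝕜] 𝕜) (hφ : ∀ v, (∀ i, φ i v = 0) → v = 0)
    (hT : ∀ i, Continuous (φ i ∘ T)) : Continuous T := by
  refine T.continuous_of_seq_closed_graph fun u f g hu hTu => sub_eq_zero.mp <| hφ _ fun i => ?_
  have h₁ : Tendsto (φ i ∘ T ∘ u) atTop (𝓝 (φ i g)) := ((φ i).continuous.tendsto g).comp hTu
  have h₂ : Tendsto (φ i ∘ T ∘ u) atTop (𝓝 (φ i (T f))) := ((hT i).tendsto f).comp hu
  rw [map_sub, tendsto_nhds_unique h₁ h₂, sub_self]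

theorem abs_real_inner_le_sqrt_mul_norm {H : Type*} [NormedAddCommGroup H]
    [InnerProductSpace ℝ H] (v : H) {w : H} {M : ℝ} (hw : ⟪w, w⟫ ≤ M) :
    |⟪v, w⟫| ≤ √M * ‖v‖ := by
  have hw' : ‖w‖ ≤ √M := by
    rw [← Real.sqrt_sq (norm_nonneg w), ← real_inner_self_eq_norm_sq]
    exact Real.sqrt_le_sqrt hw
  calc |⟪v, w⟫| ≤ ‖v‖ * ‖w‖ := abs_real_inner_le_norm v w
    _ ≤ √M * ‖v‖ := by rw [mul_comm]; gcongr

section IntegralLinearMap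

variable {X H : Type*} [MeasurableSpace X] [NormedAddCommGroup H] [NormedSpace ℝ H]

noncomputable def integralLinearMap (μ : Measure X) (F : H →ₗ[ℝ] X → ℝ)
    (hF : ∀ f, Integrable (F f) μ) : H →ₗ[ℝ] ℝ where
  toFun f := ∫ x, F f x ∂μ
  map_add' f g := by simp only [map_add, Pi.add_apply]; exact integral_add (hF f) (hF g)
  map_smul' c f := by simp only [map_smul, Pi.smul_apply, smul_eq_mul, integral_const_mul,
    RingHom.id_apply]

theorem continuous_integralLinearMap {μ : Measure X} [IsFiniteMeasure μ] {F : H →ₗ[ℝ] X → ℝ}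
    (hF : ∀ f, Integrable (F f) μ) {C : ℝ} (hC : ∀ f, ∀ᵐ x ∂μ, ‖F f x‖ ≤ C * ‖f‖) :
    Continuous (integralLinearMap μ F hF) :=
  AddMonoidHomClass.continuous_of_bound _ (C * μ.real Set.univ) fun f => by
    rw [mul_right_comm]; exact norm_integral_le_of_norm_le_const (hC f)

end IntegralLinearMap

theorem koopman_RKHS_invariance_bounded_general
    {n : ℕ}
    (Ω : Set (EuclideanSpace ℝ (Fin n)))
    (hΩopen : IsOpen Ω)
    (ρ : ProbabilityTheory.Kernel (EuclideanSpace ℝ (Fin n)) (EuclideanSpace ℝ (Fin n)))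
    [IsMarkovKernel ρ]
    {H : Type*} [NormedAddCommGroup H] [InnerProductSpace ℝ H] [CompleteSpace H]
    -- the elements of `H` are (bounded continuous) functions on `Ω`,
    -- realized through the linear evaluation map `ev`
    (ev : H →ₗ[ℝ] (EuclideanSpace ℝ (Fin n) → ℝ))
    (hev_inj : ∀ f : H, (∀ x ∈ Ω, ev f x = 0) → f = 0)
    (hev_cont : ∀ f : H, ContinuousOn (ev f) Ω)
    -- canonical features and the reproducing property
    (Φ : EuclideanSpace ℝ (Fin n) → H)
    (hrepr : ∀ (f : H), ∀ x ∈ Ω, ev f x = ⟪f, Φ x⟫)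
    -- the kernel `k(x,y) = ⟪Φ x, Φ y⟫` is bounded on the diagonal
    (M : ℝ) (hM : ∀ x ∈ Ω, ⟪Φ x, Φ x⟫ ≤ M)
    -- invariance: the Koopman operator maps `H` into `H`
    (Koop : H → H)
    (hKoop : ∀ (f : H), ∀ x ∈ Ω, ev (Koop f) x = ∫ y in Ω, ev f y ∂(ρ x)) :
    (∀ f g : H, Koop (f + g) = Koop f + Koop g) ∧
    (∀ (c : ℝ) (f : H), Koop (c • f) = c • Koop f) ∧
    (∃ C : ℝ, ∀ f : H, ‖Koop f‖ ≤ C * ‖f‖) := by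
  have hΩ := hΩopen.measurableSet
  have hbound (x : EuclideanSpace ℝ (Fin n)) (f : H) :
      ∀ᵐ y ∂(ρ x).restrict Ω, ‖ev f y‖ ≤ √M * ‖f‖ :=
    ae_restrict_of_forall_mem hΩ fun y hy => by
      rw [Real.norm_eq_abs, hrepr f y hy]; exact abs_real_inner_le_sqrt_mul_norm f (hM y hy)
  have hint (x : EuclideanSpace ℝ (Fin n)) (f : H) : Integrable (ev f) ((ρ x).restrict Ω) :=
    .of_bound ((hev_cont f).aestronglyMeasurable hΩ) _ (hbound x f)
  let A (x : Ω) : H →ₗ[ℝ] ℝ := integralLinearMap ((ρ x).restrict Ω) ev (hint x)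
  let φ (x : Ω) : H →L[ℝ] ℝ := innerSL ℝ (Φ x)
  have hφ (v : H) (hv : ∀ x, φ x v = 0) : v = 0 :=
    hev_inj v fun x hx => by rw [hrepr v x hx, real_inner_comm]; exact hv ⟨x, hx⟩
  have hφKoop (x : Ω) (f : H) : φ x (Koop f) = A x f := by
    change ⟪Φ x, Koop f⟫ = ∫ y in Ω, ev f y ∂(ρ x)
    rw [real_inner_comm, ← hrepr _ x x.2, hKoop f x x.2]
  have hlin : IsLinearMap ℝ Koop :=
    isLinearMap_of_separating_comp (fun x => (φ x : H →ₗ[ℝ] ℝ)) hφ A hφKoop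
  have hcont : Continuous (hlin.mk' Koop) :=
    (hlin.mk' Koop).continuous_of_separating_continuous_comp φ hφ fun x =>
      (continuous_integralLinearMap (hint x) (hbound x)).congr fun f => (hφKoop x f).symm
  obtain ⟨C, -, hC⟩ := SemilinearMapClass.bound_of_continuous _ hcont
  exact ⟨hlin.map_add, hlin.map_smul, C, hC⟩

/-- Let `H ⊆ C_b(Ω)` be an RKHS of bounded continuous functions on `Ω`
with bounded kernel (`sup_{x∈Ω} k(x,x) < ∞`, encoded by the bound `M` on `⟪Φ x, Φ x⟫`),
and assume `H` is invariant under the Koopman operator, i.e. there is `Koop : H → H` with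
`(Koop f)(x) = ∫_Ω f dρ_x` for all `f ∈ H` and `x ∈ Ω`.  Then `Koop` is a bounded
linear operator on `H`. -/
theorem koopman_RKHS_invariance_bounded
    {n : ℕ} (hn : 1 ≤ n)
    (Ω : Set (EuclideanSpace ℝ (Fin n)))
    (hΩne : Ω.Nonempty) (hΩopen : IsOpen Ω) (hΩbdd : Bornology.IsBounded Ω)
    (ρ : ProbabilityTheory.Kernel (EuclideanSpace ℝ (Fin n)) (EuclideanSpace ℝ (Fin n)))
    [IsMarkovKernel ρ] (hρΩ : ∀ x ∈ Ω, ρ x Ω = 1)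
    {H : Type*} [NormedAddCommGroup H] [InnerProductSpace ℝ H] [CompleteSpace H]
    -- the elements of `H` are (bounded continuous) functions on `Ω`,
    -- realized through the linear evaluation map `ev`
    (ev : H →ₗ[ℝ] (EuclideanSpace ℝ (Fin n) → ℝ))
    (hev_inj : ∀ f : H, (∀ x ∈ Ω, ev f x = 0) → f = 0)
    (hev_cont : ∀ f : H, ContinuousOn (ev f) Ω)
    (hev_bdd : ∀ f : H, ∃ M, ∀ x ∈ Ω, |ev f x| ≤ M)
    -- canonical features and the reproducing property
    (Φ : EuclideanSpace ℝ (Fin n) → H)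
    (hrepr : ∀ (f : H), ∀ x ∈ Ω, ev f x = ⟪f, Φ x⟫)
    -- the kernel `k(x,y) = ⟪Φ x, Φ y⟫` is bounded on the diagonal
    (M : ℝ) (hM : ∀ x ∈ Ω, ⟪Φ x, Φ x⟫ ≤ M)
    -- invariance: the Koopman operator maps `H` into `H`
    (Koop : H → H)
    (hKoop : ∀ (f : H), ∀ x ∈ Ω, ev (Koop f) x = ∫ y in Ω, ev f y ∂(ρ x)) :
    (∀ f g : H, Koop (f + g) = Koop f + Koop g) ∧
    (∀ (c : ℝ) (f : H), Koop (c • f) = c • Koop f) ∧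
    (∃ C : ℝ, ∀ f : H, ‖Koop f‖ ≤ C * ‖f‖) :=
  koopman_RKHS_invariance_bounded_general Ω hΩopen ρ ev hev_inj hev_cont Φ hrepr M hM Koop hKoop
end

section
/- Let n = 1 and Ω = (0,1). Let ρ_x be the doubly truncated normal distribution on (0,1) with location parameter x ∈ (0,1) and scale 1, i.e., ρ_x has density p(x,y) = ( (1/√(2π)) e^{−(y−x)²/2} ) / ( F(1−x) − F(−x) ) for y ∈ (0,1), where F is the standard normal cumulative distribution function. Then the Sobolev space H¹((0,1)) is invariant under the associated Koopman operator K, which acts by (Kf)(x) = ∫₀¹ f(y) p(x,y) dy. -/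
open MeasureTheory

noncomputable section

/-- `g` is the weak derivative of `f` on the interval `(0,1)`. -/
def IsWeakDeriv01 (f g : ℝ → ℝ) : Prop :=
  ∀ φ : ℝ → ℝ, ContDiff ℝ (⊤ : ℕ∞) φ → HasCompactSupport φ → tsupport φ ⊆ Set.Ioo 0 1 →
    ∫ x in Set.Ioo (0:ℝ) 1, f x * deriv φ x = -∫ x in Set.Ioo (0:ℝ) 1, g x * φ x

/-- Membership in the Sobolev space `H¹((0,1))`. -/
def MemH1 (f : ℝ → ℝ) : Prop :=
  MemLp f 2 (volume.restrict (Set.Ioo (0:ℝ) 1)) ∧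
  ∃ g : ℝ → ℝ, MemLp g 2 (volume.restrict (Set.Ioo (0:ℝ) 1)) ∧ IsWeakDeriv01 f g

/-- The standard normal cumulative distribution function. -/
noncomputable def stdNormalCDF (ξ : ℝ) : ℝ :=
  (∫ t in Set.Iio ξ, Real.exp (-t ^ 2 / 2)) / Real.sqrt (2 * Real.pi)

/-- The density of the doubly truncated normal distribution on `(0,1)` with location
parameter `x` and scale `1`. -/
noncomputable def truncNormalDensity (x y : ℝ) : ℝ :=
  (Real.exp (-(y - x) ^ 2 / 2) / Real.sqrt (2 * Real.pi)) /
    (stdNormalCDF (1 - x) - stdNormalCDF (-x))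

section
open Set

namespace TruncAux

lemma s2p_pos : 0 < Real.sqrt (2 * Real.pi) := Real.sqrt_pos.2 (by positivity)

lemma one_le_s2p : 1 ≤ Real.sqrt (2 * Real.pi) := by
  rw [show (1:ℝ) = Real.sqrt 1 by simp]
  exact Real.sqrt_le_sqrt (by nlinarith [Real.pi_gt_three])

lemma gauss_integrable : Integrable (fun t : ℝ => Real.exp (-t ^ 2 / 2)) := by
  have h : ∀ t : ℝ, Real.exp (-t ^ 2 / 2) = Real.exp (-(1/2 : ℝ) * t ^ 2) := fun t => by
    ring
  simp only [h]
  exact integrable_exp_neg_mul_sq (by norm_num)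

lemma gauss_le_one (u : ℝ) : Real.exp (-u ^ 2 / 2) ≤ 1 :=
  Real.exp_le_one_iff.2 (by nlinarith [sq_nonneg u])

lemma gauss_pos (u : ℝ) : 0 < Real.exp (-u ^ 2 / 2) := Real.exp_pos _

lemma hasDerivAt_cdf (ξ : ℝ) :
    HasDerivAt stdNormalCDF (Real.exp (-ξ ^ 2 / 2) / Real.sqrt (2 * Real.pi)) ξ := by
  have hint := gauss_integrable
  have key : stdNormalCDF = fun x =>
      ((∫ t in Set.Iic (0:ℝ), Real.exp (-t ^ 2 / 2)) +
        ∫ t in (0:ℝ)..x, Real.exp (-t ^ 2 / 2)) / Real.sqrt (2 * Real.pi) := by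
    funext x
    rw [stdNormalCDF]
    congr 1
    rw [← intervalIntegral.integral_Iic_sub_Iic hint.integrableOn hint.integrableOn]
    simp only [integral_Iic_eq_integral_Iio]
    ring
  rw [key]
  have hftc : HasDerivAt (fun x => ∫ t in (0:ℝ)..x, Real.exp (-t ^ 2 / 2))
      (Real.exp (-ξ ^ 2 / 2)) ξ :=
    intervalIntegral.integral_hasDerivAt_right hint.intervalIntegrable
      ((Real.continuous_exp.comp (by continuity)).stronglyMeasurableAtFilter _ _)
      ((Real.continuous_exp.comp (by continuity)).continuousAt)
  have := ((hasDerivAt_const ξ (∫ t in Set.Iic (0:ℝ), Real.exp (-t ^ 2 / 2))).add hftc).div_const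
    (Real.sqrt (2 * Real.pi))
  simpa using this

/-- The denominator. -/
def Dd (x : ℝ) : ℝ := stdNormalCDF (1 - x) - stdNormalCDF (-x)

def Dd' (x : ℝ) : ℝ :=
  (Real.exp (-x ^ 2 / 2) - Real.exp (-(1 - x) ^ 2 / 2)) / Real.sqrt (2 * Real.pi)

lemma hasDerivAt_Dd (x : ℝ) : HasDerivAt Dd (Dd' x) x := by
  have h1 : HasDerivAt (fun x : ℝ => stdNormalCDF (1 - x))
      (Real.exp (-(1 - x) ^ 2 / 2) / Real.sqrt (2 * Real.pi) * (-1)) x :=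
    (hasDerivAt_cdf (1 - x)).comp x (((hasDerivAt_id x).const_sub 1))
  have h2 : HasDerivAt (fun x : ℝ => stdNormalCDF (-x))
      (Real.exp (-(-x) ^ 2 / 2) / Real.sqrt (2 * Real.pi) * (-1)) x :=
    (hasDerivAt_cdf (-x)).comp x ((hasDerivAt_id x).neg)
  have := h1.sub h2
  refine this.congr_deriv ?_
  rw [Dd', neg_sq]
  ring

lemma Dd_pos (x : ℝ) : 0 < Dd x := by
  have hint := gauss_integrable
  have : Dd x = (∫ t in (-x)..(1 - x), Real.exp (-t ^ 2 / 2)) / Real.sqrt (2 * Real.pi) := by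
    rw [Dd, stdNormalCDF, stdNormalCDF, div_sub_div_same,
      ← integral_Iic_eq_integral_Iio, ← integral_Iic_eq_integral_Iio,
      intervalIntegral.integral_Iic_sub_Iic hint.integrableOn hint.integrableOn]
  rw [this]
  apply div_pos _ s2p_pos
  exact intervalIntegral.intervalIntegral_pos_of_pos hint.intervalIntegrable gauss_pos (by linarith)

lemma cdf_nonneg (ξ : ℝ) : 0 ≤ stdNormalCDF ξ := by
  apply div_nonneg _ s2p_pos.le
  exact setIntegral_nonneg measurableSet_Iio fun t _ => (gauss_pos t).le

lemma cdf_le_one (ξ : ℝ) : stdNormalCDF ξ ≤ 1 := by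
  rw [stdNormalCDF, div_le_one s2p_pos]
  have h1 : (∫ t in Set.Iio ξ, Real.exp (-t ^ 2 / 2)) ≤ ∫ t, Real.exp (-t ^ 2 / 2) :=
    setIntegral_le_integral gauss_integrable
      (Filter.Eventually.of_forall fun t => (gauss_pos t).le)
  have h2 : (∫ t : ℝ, Real.exp (-t ^ 2 / 2)) = Real.sqrt (2 * Real.pi) := by
    have := integral_gaussian (1/2)
    rw [show Real.pi / (1/2) = 2 * Real.pi by ring] at this
    rw [← this]
    congr 1 with t
    ring_nf
  linarith

lemma Dd_le_one (x : ℝ) : Dd x ≤ 1 := by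
  have := cdf_le_one (1 - x); have := cdf_nonneg (-x); rw [Dd]; linarith

lemma abs_Dd'_le (x : ℝ) : |Dd' x| ≤ 2 := by
  rw [Dd', abs_div]
  rw [abs_of_pos s2p_pos]
  have h1 := gauss_le_one x
  have h2 := gauss_le_one (1 - x)
  have h3 := (gauss_pos x).le
  have h4 := (gauss_pos (1 - x)).le
  have habs : |Real.exp (-x ^ 2 / 2) - Real.exp (-(1 - x) ^ 2 / 2)| ≤ 2 := by
    rw [abs_sub_le_iff]; constructor <;> linarith
  have := div_le_self (abs_nonneg (Real.exp (-x ^ 2 / 2) - Real.exp (-(1 - x) ^ 2 / 2))) one_le_s2p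
  linarith

/-- x-derivative of the truncated normal density. -/
def dpd (x y : ℝ) : ℝ :=
  ((y - x) * Real.exp (-(y - x) ^ 2 / 2) / Real.sqrt (2 * Real.pi) * Dd x -
    Real.exp (-(y - x) ^ 2 / 2) / Real.sqrt (2 * Real.pi) * Dd' x) / Dd x ^ 2

lemma continuous_Dd : Continuous Dd :=
  continuous_iff_continuousAt.2 fun x => (hasDerivAt_Dd x).continuousAt

lemma hasDerivAt_pd (y x : ℝ) :
    HasDerivAt (fun x => truncNormalDensity x y) (dpd x y) x := by
  have hinner : HasDerivAt (fun x : ℝ => -(y - x) ^ 2 / 2) (y - x) x := by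
    have h0 : HasDerivAt (fun x : ℝ => y - x) (-1) x := (hasDerivAt_id x).const_sub y
    have h1 := (h0.pow 2).neg.div_const 2
    refine h1.congr_deriv ?_
    push_cast
    ring
  have hn : HasDerivAt (fun x : ℝ => Real.exp (-(y - x) ^ 2 / 2) / Real.sqrt (2 * Real.pi))
      ((y - x) * Real.exp (-(y - x) ^ 2 / 2) / Real.sqrt (2 * Real.pi)) x := by
    have := hinner.exp.div_const (Real.sqrt (2 * Real.pi))
    refine this.congr_deriv ?_
    ring
  have hq := hn.div (hasDerivAt_Dd x) (Dd_pos x).ne'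
  have : (fun x => truncNormalDensity x y) =
      fun x => (Real.exp (-(y - x) ^ 2 / 2) / Real.sqrt (2 * Real.pi)) / Dd x := by
    funext x; rfl
  rw [this, dpd]
  exact hq

lemma abs_pd_le {c : ℝ} (hc : 0 < c) (hcD : ∀ x ∈ Icc (-1:ℝ) 2, c ≤ Dd x)
    {x : ℝ} (hx : x ∈ Icc (-1:ℝ) 2) (y : ℝ) :
    |truncNormalDensity x y| ≤ 1 / c := by
  have hD := hcD x hx
  have h1 : truncNormalDensity x y =
      (Real.exp (-(y - x) ^ 2 / 2) / Real.sqrt (2 * Real.pi)) / Dd x := rfl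
  rw [h1, abs_div, abs_div, abs_of_pos (Dd_pos x), abs_of_pos s2p_pos,
    abs_of_pos (gauss_pos _)]
  have h2 : Real.exp (-(y - x) ^ 2 / 2) / Real.sqrt (2 * Real.pi) ≤ 1 := by
    have := div_le_self (gauss_pos (y - x)).le one_le_s2p
    linarith [gauss_le_one (y - x)]
  have h3 : (0:ℝ) < Dd x := Dd_pos x
  calc Real.exp (-(y - x) ^ 2 / 2) / Real.sqrt (2 * Real.pi) / Dd x ≤ 1 / Dd x := by
        gcongr
    _ ≤ 1 / c := by gcongr

lemma abs_dpd_le {c : ℝ} (hc : 0 < c) (hcD : ∀ x ∈ Icc (-1:ℝ) 2, c ≤ Dd x)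
    {x : ℝ} (hx : x ∈ Icc (-1:ℝ) 2) {y : ℝ} (hy : y ∈ Ioo (0:ℝ) 1) :
    |dpd x y| ≤ 5 / c ^ 2 := by
  have hD := hcD x hx
  have hDpos := Dd_pos x
  have hDle := Dd_le_one x
  have hE1 := gauss_le_one (y - x)
  have hE0 := (gauss_pos (y - x)).le
  have hyx : |y - x| ≤ 3 := by
    rw [abs_le]; obtain ⟨h1, h2⟩ := hx; obtain ⟨h3, h4⟩ := hy; constructor <;> linarith
  have hA : |(y - x) * Real.exp (-(y - x) ^ 2 / 2) / Real.sqrt (2 * Real.pi)| ≤ 3 := by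
    rw [abs_div, abs_of_pos s2p_pos, abs_mul, abs_of_pos (gauss_pos _)]
    have h5 : |y - x| * Real.exp (-(y - x) ^ 2 / 2) ≤ 3 := by
      calc |y - x| * Real.exp (-(y - x) ^ 2 / 2) ≤ 3 * 1 := by
            apply mul_le_mul hyx hE1 hE0 (by norm_num)
        _ = 3 := by norm_num
    have := div_le_self (by positivity : (0:ℝ) ≤ |y - x| * Real.exp (-(y - x) ^ 2 / 2)) one_le_s2p
    linarith
  have hB : |Real.exp (-(y - x) ^ 2 / 2) / Real.sqrt (2 * Real.pi)| ≤ 1 := by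
    rw [abs_div, abs_of_pos s2p_pos, abs_of_pos (gauss_pos _)]
    have := div_le_self hE0 one_le_s2p
    linarith
  have hD' := abs_Dd'_le x
  rw [dpd, abs_div, abs_of_pos (by positivity : (0:ℝ) < Dd x ^ 2)]
  have htri : ∀ a b : ℝ, |a - b| ≤ |a| + |b| := fun a b => by
    calc |a - b| = |a + -b| := by rw [sub_eq_add_neg]
      _ ≤ |a| + |-b| := abs_add_le _ _
      _ = |a| + |b| := by rw [abs_neg]
  have hnum : |(y - x) * Real.exp (-(y - x) ^ 2 / 2) / Real.sqrt (2 * Real.pi) * Dd x -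
      Real.exp (-(y - x) ^ 2 / 2) / Real.sqrt (2 * Real.pi) * Dd' x| ≤ 5 := by
    have h7 := htri ((y - x) * Real.exp (-(y - x) ^ 2 / 2) / Real.sqrt (2 * Real.pi) * Dd x)
      (Real.exp (-(y - x) ^ 2 / 2) / Real.sqrt (2 * Real.pi) * Dd' x)
    rw [abs_mul, abs_mul] at h7
    have h6 : |Dd x| ≤ 1 := by rw [abs_of_pos hDpos]; exact hDle
    have h8 : (0:ℝ) ≤ |Dd x| := abs_nonneg _
    have h9 : (0:ℝ) ≤ |Dd' x| := abs_nonneg _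
    nlinarith [abs_nonneg ((y - x) * Real.exp (-(y - x) ^ 2 / 2) / Real.sqrt (2 * Real.pi)),
      abs_nonneg (Real.exp (-(y - x) ^ 2 / 2) / Real.sqrt (2 * Real.pi))]
  have hc2 : c ^ 2 ≤ Dd x ^ 2 := by nlinarith
  calc _ ≤ (5:ℝ) / Dd x ^ 2 := by gcongr
    _ ≤ 5 / c ^ 2 := by gcongr

lemma exists_c : ∃ c : ℝ, 0 < c ∧ ∀ x ∈ Icc (-1:ℝ) 2, c ≤ Dd x := by
  obtain ⟨x₀, _, hmin⟩ := (isCompact_Icc (a := (-1:ℝ)) (b := 2)).exists_isMinOn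
    (by norm_num : (Icc (-1:ℝ) 2).Nonempty) continuous_Dd.continuousOn
  exact ⟨Dd x₀, Dd_pos x₀, fun x hx => hmin hx⟩

lemma continuous_pd_y (x : ℝ) : Continuous (fun y => truncNormalDensity x y) := by
  have h : Continuous (fun y : ℝ => Real.exp (-(y - x) ^ 2 / 2) / Real.sqrt (2 * Real.pi)) :=
    Continuous.div_const (by continuity) _
  exact h.div_const _

lemma continuous_dpd_y (x : ℝ) : Continuous (fun y => dpd x y) := by
  have hB : Continuous (fun y : ℝ => Real.exp (-(y - x) ^ 2 / 2) / Real.sqrt (2 * Real.pi)) :=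
    Continuous.div_const (by continuity) _
  have hA : Continuous
      (fun y : ℝ => (y - x) * Real.exp (-(y - x) ^ 2 / 2) / Real.sqrt (2 * Real.pi)) :=
    Continuous.div_const (by continuity) _
  exact Continuous.div_const ((hA.mul continuous_const).sub (hB.mul continuous_const)) _

lemma Kf_deriv (f : ℝ → ℝ) (hfi : Integrable f (volume.restrict (Ioo (0:ℝ) 1)))
    {c : ℝ} (hc : 0 < c) (hcD : ∀ x ∈ Icc (-1:ℝ) 2, c ≤ Dd x)
    {x₀ : ℝ} (hx₀ : x₀ ∈ Icc (0:ℝ) 1) :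
    HasDerivAt (fun x => ∫ y in Ioo (0:ℝ) 1, f y * truncNormalDensity x y)
      (∫ y in Ioo (0:ℝ) 1, f y * dpd x₀ y) x₀ := by
  have hmeas : ∀ x : ℝ, AEStronglyMeasurable (fun y => f y * truncNormalDensity x y)
      (volume.restrict (Ioo (0:ℝ) 1)) := fun x =>
    hfi.aestronglyMeasurable.mul (continuous_pd_y x).aestronglyMeasurable
  have hx₀' : x₀ ∈ Icc (-1:ℝ) 2 := ⟨by linarith [hx₀.1], by linarith [hx₀.2]⟩
  have hball : Metric.ball x₀ 1 ⊆ Icc (-1:ℝ) 2 := by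
    intro x hx
    rw [Metric.mem_ball, Real.dist_eq, abs_sub_lt_iff] at hx
    exact ⟨by linarith [hx₀.1, hx.2], by linarith [hx₀.2, hx.1]⟩
  have hint : Integrable (fun y => f y * truncNormalDensity x₀ y)
      (volume.restrict (Ioo (0:ℝ) 1)) := by
    refine Integrable.mono' (hfi.abs.mul_const (1/c)) (hmeas x₀) ?_
    refine Filter.Eventually.of_forall fun y => ?_
    rw [Real.norm_eq_abs, abs_mul]
    exact mul_le_mul_of_nonneg_left (abs_pd_le hc hcD hx₀' y) (abs_nonneg _)
  have key := hasDerivAt_integral_of_dominated_loc_of_deriv_le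
    (μ := volume.restrict (Ioo (0:ℝ) 1))
    (F := fun x y => f y * truncNormalDensity x y) (F' := fun x y => f y * dpd x y)
    (bound := fun y => |f y| * (5 / c ^ 2)) (Metric.ball_mem_nhds x₀ one_pos)
    (Filter.Eventually.of_forall fun x => hmeas x) hint
    (hfi.aestronglyMeasurable.mul (continuous_dpd_y x₀).aestronglyMeasurable)
    ?_ (hfi.abs.mul_const _) ?_
  · exact key.2
  · refine (ae_restrict_iff' measurableSet_Ioo).2 (Filter.Eventually.of_forall fun y hy => ?_)
    intro x hx
    rw [Real.norm_eq_abs, abs_mul]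
    exact mul_le_mul_of_nonneg_left (abs_dpd_le hc hcD (hball hx) hy) (abs_nonneg _)
  · refine Filter.Eventually.of_forall fun y x _ => ?_
    exact (hasDerivAt_pd y x).const_mul (f y)

end TruncAux

end

/-- For `n = 1`, `Ω = (0,1)`, and the transition kernel given by the
doubly truncated normal distribution `ρ_x = N_{(0,1)}(x,1)`, the Sobolev space
`H¹((0,1))` is invariant under the associated Koopman operator
`(Kf)(x) = ∫₀¹ f(y) p(x,y) dy`. -/
theorem truncated_normal_H1_invariance :
    ∀ f : ℝ → ℝ, MemH1 f →
      MemH1 (fun x => ∫ y in Set.Ioo (0:ℝ) 1, f y * truncNormalDensity x y) := by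
  intro f hf
  obtain ⟨c, hc, hcD⟩ := TruncAux.exists_c
  haveI hfin : IsFiniteMeasure (volume.restrict (Set.Ioo (0:ℝ) 1)) :=
    ⟨by rw [Measure.restrict_apply_univ, Real.volume_Ioo]; exact ENNReal.ofReal_lt_top⟩
  have hfi : Integrable f (volume.restrict (Set.Ioo (0:ℝ) 1)) :=
    memLp_one_iff_integrable.1 (hf.1.mono_exponent (by norm_num))
  set Kf := fun x => ∫ y in Set.Ioo (0:ℝ) 1, f y * truncNormalDensity x y with hKfdef
  set g := fun x => ∫ y in Set.Ioo (0:ℝ) 1, f y * TruncAux.dpd x y with hgdef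
  have hderiv : ∀ x ∈ Set.Icc (0:ℝ) 1, HasDerivAt Kf (g x) x :=
    fun x hx => TruncAux.Kf_deriv f hfi hc hcD hx
  -- bounds
  set CK := ∫ y in Set.Ioo (0:ℝ) 1, |f y| * (1/c) with hCK
  set Cg := ∫ y in Set.Ioo (0:ℝ) 1, |f y| * (5/c^2) with hCg
  have hKbd : ∀ x ∈ Set.Icc (0:ℝ) 1, ‖Kf x‖ ≤ CK := by
    intro x hx
    have hx2 : x ∈ Set.Icc (-1:ℝ) 2 := ⟨by linarith [hx.1], by linarith [hx.2]⟩
    refine norm_integral_le_of_norm_le (hfi.abs.mul_const _) ?_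
    refine Filter.Eventually.of_forall fun y => ?_
    rw [Real.norm_eq_abs, abs_mul]
    exact mul_le_mul_of_nonneg_left (TruncAux.abs_pd_le hc hcD hx2 y) (abs_nonneg _)
  have hgbd : ∀ x ∈ Set.Icc (0:ℝ) 1, ‖g x‖ ≤ Cg := by
    intro x hx
    have hx2 : x ∈ Set.Icc (-1:ℝ) 2 := ⟨by linarith [hx.1], by linarith [hx.2]⟩
    refine norm_integral_le_of_norm_le (hfi.abs.mul_const _) ?_
    refine (ae_restrict_iff' measurableSet_Ioo).2 (Filter.Eventually.of_forall fun y hy => ?_)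
    rw [Real.norm_eq_abs, abs_mul]
    exact mul_le_mul_of_nonneg_left (TruncAux.abs_dpd_le hc hcD hx2 hy) (abs_nonneg _)
  have hgeq : ∀ x ∈ Set.Icc (0:ℝ) 1, deriv Kf x = g x := fun x hx => (hderiv x hx).deriv
  have hKcont : ContinuousOn Kf (Set.Icc (0:ℝ) 1) :=
    fun x hx => ((hderiv x hx).continuousAt).continuousWithinAt
  constructor
  · refine MemLp.of_bound
      ((hKcont.mono Set.Ioo_subset_Icc_self).aestronglyMeasurable measurableSet_Ioo) CK ?_
    exact (ae_restrict_iff' measurableSet_Ioo).2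
      (Filter.Eventually.of_forall fun x hx => hKbd x (Set.Ioo_subset_Icc_self hx))
  · refine ⟨deriv Kf, ?_, ?_⟩
    · refine MemLp.of_bound (measurable_deriv Kf).aestronglyMeasurable Cg ?_
      refine (ae_restrict_iff' measurableSet_Ioo).2
        (Filter.Eventually.of_forall fun x hx => ?_)
      rw [hgeq x (Set.Ioo_subset_Icc_self hx)]
      exact hgbd x (Set.Ioo_subset_Icc_self hx)
    · intro φ hφ hφc hφs
      obtain ⟨M, hM⟩ := hφc.exists_bound_of_continuous hφ.continuous
      have hM0 : 0 ≤ M := le_trans (norm_nonneg (φ 0)) (hM 0)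
      have hCg0 : 0 ≤ Cg := by
        refine integral_nonneg fun y => ?_
        positivity
      have hφd : Differentiable ℝ φ := hφ.differentiable (by simp)
      -- interval integrability
      have hint1 : IntervalIntegrable (fun x => deriv Kf x * φ x) volume 0 1 := by
        rw [intervalIntegrable_iff_integrableOn_Ioc_of_le zero_le_one]
        refine Integrable.mono' (integrable_const (Cg * M))
          ((measurable_deriv Kf).aestronglyMeasurable.mul
            hφ.continuous.aestronglyMeasurable) ?_
        refine (ae_restrict_iff' measurableSet_Ioc).2
          (Filter.Eventually.of_forall fun x hx => ?_)
        have hx' : x ∈ Set.Icc (0:ℝ) 1 := ⟨hx.1.le, hx.2⟩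
        rw [Real.norm_eq_abs, abs_mul]
        have h1 : |deriv Kf x| ≤ Cg := by rw [hgeq x hx']; exact hgbd x hx'
        exact mul_le_mul h1 (hM x) (abs_nonneg _) hCg0
      have hint2 : IntervalIntegrable (fun x => Kf x * deriv φ x) volume 0 1 := by
        apply ContinuousOn.intervalIntegrable
        rw [Set.uIcc_of_le zero_le_one]
        exact hKcont.mul (hφ.continuous_deriv (by simp)).continuousOn
      have hFTC : ∫ x in (0:ℝ)..1, (deriv Kf x * φ x + Kf x * deriv φ x) =
          Kf 1 * φ 1 - Kf 0 * φ 0 := by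
        refine intervalIntegral.integral_eq_sub_of_hasDerivAt (f := fun x => Kf x * φ x)
          (fun x hx => ?_) (hint1.add hint2)
        rw [Set.uIcc_of_le zero_le_one] at hx
        rw [hgeq x hx]
        exact (hderiv x hx).mul (hφd x).hasDerivAt
      have hφ0 : φ 0 = 0 := by
        apply image_eq_zero_of_notMem_tsupport
        intro h
        have := hφs h
        simp at this
      have hφ1 : φ 1 = 0 := by
        apply image_eq_zero_of_notMem_tsupport
        intro h
        have := hφs h
        simp at this
      rw [hφ0, hφ1, intervalIntegral.integral_add hint1 hint2] at hFTC
      have e1 : ∫ x in (0:ℝ)..1, deriv Kf x * φ x = ∫ x in Set.Ioo (0:ℝ) 1, deriv Kf x * φ x := by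
        rw [intervalIntegral.integral_of_le zero_le_one, integral_Ioc_eq_integral_Ioo]
      have e2 : ∫ x in (0:ℝ)..1, Kf x * deriv φ x = ∫ x in Set.Ioo (0:ℝ) 1, Kf x * deriv φ x := by
        rw [intervalIntegral.integral_of_le zero_le_one, integral_Ioc_eq_integral_Ioo]
      rw [e1, e2] at hFTC
      simp only [mul_zero, sub_zero] at hFTC
      linarith

end
end

section
/- Assume K ∈ L(H,H) and K ∈ L(C_b(Ω), C_b(Ω)). Then the kernel EDMD approximant \hat{K} = S_X K S_X satisfies the operator-norm error bound ‖K − \hat{K}‖_{H→C_b} ≤ (1 + ‖K‖_{H→H}) · ‖I − S_X‖_{H→C_b}, i.e., ‖Kf − S_X K S_X f‖_∞ ≤ (1 + ‖K‖_{H→H}) · ‖I − S_X‖_{H→C_b} · ‖f‖_H for all f ∈ H. -/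
open MeasureTheory ProbabilityTheory
open scoped RealInnerProductSpace

/-!
Split `Kf − S K S f = K (f − S f) + (I − S) (K S f)`. The Koopman operator averages against the
probability measures `ρ_z` restricted to `Ω`, so it does not increase the sup-norm on `Ω` and the
first term is at most `CS ‖f‖`. The second is at most `CS ‖K S f‖ ≤ CS · CK · ‖f‖`, since an
orthogonal projection does not increase the norm.
-/

theorem norm_le_norm_of_inner_sub_self_eq_zero {E : Type*} [NormedAddCommGroup E]
    [InnerProductSpace ℝ E] {g p : E} (h : ⟪g - p, p⟫ = 0) : ‖p‖ ≤ ‖g‖ := by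
  have hpyth := norm_add_sq_eq_norm_sq_add_norm_sq_real h
  rw [sub_add_cancel] at hpyth
  exact mul_self_le_mul_self_iff (norm_nonneg p) (norm_nonneg g) |>.2 (by
    nlinarith [mul_self_nonneg ‖g - p‖])

theorem abs_setIntegral_le_of_measure_eq_one {α : Type*} [MeasurableSpace α] {μ : Measure α}
    {s : Set α} (hs : μ s = 1) {g : α → ℝ} {C : ℝ} (hg : ∀ y ∈ s, |g y| ≤ C) :
    |∫ y in s, g y ∂μ| ≤ C := by
  have h := norm_setIntegral_le_of_norm_le_const (hs ▸ ENNReal.one_lt_top) fun y hy =>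
    (Real.norm_eq_abs (g y)).trans_le (hg y hy)
  rwa [measureReal_def, hs, ENNReal.toReal_one, mul_one, Real.norm_eq_abs] at h

theorem kEDMD_deterministic_error_bound_general
    {n : ℕ}
    (Ω : Set (EuclideanSpace ℝ (Fin n)))
    (ρ : ProbabilityTheory.Kernel (EuclideanSpace ℝ (Fin n)) (EuclideanSpace ℝ (Fin n)))
    (hρΩ : ∀ x ∈ Ω, ρ x Ω = 1)
    {H : Type*} [NormedAddCommGroup H] [InnerProductSpace ℝ H]
    -- `H` is an RKHS of functions on `Ω` with features `Φ` and bounded continuous kernel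
    (ev : H →ₗ[ℝ] (EuclideanSpace ℝ (Fin n) → ℝ))
    (Φ : EuclideanSpace ℝ (Fin n) → H)
    -- pairwise distinct data points `X = {x 1, …, x d} ⊆ Ω`
    (d : ℕ) (x : Fin d → EuclideanSpace ℝ (Fin n))
    -- `S` is the `H`-orthogonal projection onto `V_X = span{Φ_{x_i}}`
    (S : H →L[ℝ] H)
    (hSmem : ∀ f : H, S f ∈ Submodule.span ℝ (Set.range fun i => Φ (x i)))
    (hSorth : ∀ f : H, ∀ g ∈ Submodule.span ℝ (Set.range fun i => Φ (x i)),
      ⟪f - S f, g⟫ = 0)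
    -- the Koopman operator `K ∈ L(H,H)` acts by `(Kf)(x) = ∫_Ω f dρ_x` …
    (Koop : H →L[ℝ] H)
    (hKoop : ∀ (f : H), ∀ z ∈ Ω, ev (Koop f) z = ∫ y in Ω, ev f y ∂(ρ z))
    -- … with `H → H` operator-norm bound `CK` …
    (CK : ℝ) (hCK : ∀ f : H, ‖Koop f‖ ≤ CK * ‖f‖)
    -- `CS` bounds the projection error `‖I − S_X‖_{H → C_b}`
    (CS : ℝ) (hCS : ∀ g : H, ∀ z ∈ Ω, |ev g z - ev (S g) z| ≤ CS * ‖g‖) :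
    ∀ f : H, ∀ z ∈ Ω,
      |ev (Koop f) z - ev (S (Koop (S f))) z| ≤ (1 + CK) * CS * ‖f‖ := by
  intro f z hz
  rcases eq_or_ne f 0 with rfl | hf
  · simp
  have hfpos : 0 < ‖f‖ := norm_pos_iff.2 hf
  have hCS₀ : 0 ≤ CS := nonneg_of_mul_nonneg_left ((abs_nonneg _).trans (hCS f z hz)) hfpos
  have hCK₀ : 0 ≤ CK := nonneg_of_mul_nonneg_left ((norm_nonneg _).trans (hCK f)) hfpos
  have hSf : ‖S f‖ ≤ ‖f‖ := norm_le_norm_of_inner_sub_self_eq_zero (hSorth f _ (hSmem f))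
  have hfirst : |ev (Koop f) z - ev (Koop (S f)) z| ≤ CS * ‖f‖ := by
    rw [← Pi.sub_apply, ← map_sub, ← map_sub, hKoop _ z hz]
    exact abs_setIntegral_le_of_measure_eq_one (hρΩ z hz) fun y hy => by
      simpa using hCS f y hy
  have hsecond : |ev (Koop (S f)) z - ev (S (Koop (S f))) z| ≤ CK * CS * ‖f‖ :=
    calc _ ≤ CS * ‖Koop (S f)‖ := hCS _ z hz
      _ ≤ CS * (CK * ‖f‖) := by gcongr; exact (hCK _).trans (by gcongr)
      _ = CK * CS * ‖f‖ := by ring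
  calc _ ≤ |ev (Koop f) z - ev (Koop (S f)) z|
        + |ev (Koop (S f)) z - ev (S (Koop (S f))) z| := abs_sub_le _ _ _
    _ ≤ (1 + CK) * CS * ‖f‖ := by linarith

/-- (Deterministic error bound.) If the Koopman operator is bounded on
the RKHS `H` (with bound `CK`) and maps `C_b(Ω)` into `C_b(Ω)`, then the kernel EDMD
approximant `K̂ = S_X K S_X` satisfies the pointwise error bound
`‖Kf − S_X K S_X f‖_∞ ≤ (1 + CK) · CS · ‖f‖_H`, where `CS` bounds `‖I − S_X‖_{H→C_b}`. -/
theorem kEDMD_deterministic_error_bound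
    {n : ℕ} (hn : 1 ≤ n)
    (Ω : Set (EuclideanSpace ℝ (Fin n)))
    (hΩne : Ω.Nonempty) (hΩopen : IsOpen Ω) (hΩbdd : Bornology.IsBounded Ω)
    (ρ : ProbabilityTheory.Kernel (EuclideanSpace ℝ (Fin n)) (EuclideanSpace ℝ (Fin n)))
    [IsMarkovKernel ρ] (hρΩ : ∀ x ∈ Ω, ρ x Ω = 1)
    {H : Type*} [NormedAddCommGroup H] [InnerProductSpace ℝ H] [CompleteSpace H]
    -- `H` is an RKHS of functions on `Ω` with features `Φ` and bounded continuous kernel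
    (ev : H →ₗ[ℝ] (EuclideanSpace ℝ (Fin n) → ℝ))
    (Φ : EuclideanSpace ℝ (Fin n) → H)
    (hrepr : ∀ (f : H), ∀ x ∈ Ω, ev f x = ⟪f, Φ x⟫)
    (hΦcont : ContinuousOn Φ Ω)
    (Mk : ℝ) (hMk : ∀ x ∈ Ω, ∀ y ∈ Ω, |⟪Φ x, Φ y⟫| ≤ Mk)
    -- pairwise distinct data points `X = {x 1, …, x d} ⊆ Ω`
    (d : ℕ) (hd : 1 ≤ d) (x : Fin d → EuclideanSpace ℝ (Fin n))
    (hxΩ : ∀ i, x i ∈ Ω) (hxinj : Function.Injective x)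
    -- `S` is the `H`-orthogonal projection onto `V_X = span{Φ_{x_i}}`
    (S : H →L[ℝ] H)
    (hSmem : ∀ f : H, S f ∈ Submodule.span ℝ (Set.range fun i => Φ (x i)))
    (hSorth : ∀ f : H, ∀ g ∈ Submodule.span ℝ (Set.range fun i => Φ (x i)),
      ⟪f - S f, g⟫ = 0)
    -- the Koopman operator `K ∈ L(H,H)` acts by `(Kf)(x) = ∫_Ω f dρ_x` …
    (Koop : H →L[ℝ] H)
    (hKoop : ∀ (f : H), ∀ z ∈ Ω, ev (Koop f) z = ∫ y in Ω, ev f y ∂(ρ z))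
    -- … with `H → H` operator-norm bound `CK` …
    (CK : ℝ) (hCK : ∀ f : H, ‖Koop f‖ ≤ CK * ‖f‖)
    -- … and `K ∈ L(C_b(Ω), C_b(Ω))`
    (hKCb : ∀ g : EuclideanSpace ℝ (Fin n) → ℝ, ContinuousOn g Ω →
      (∃ M, ∀ y ∈ Ω, |g y| ≤ M) →
      ContinuousOn (fun z => ∫ y in Ω, g y ∂(ρ z)) Ω)
    -- `CS` bounds the projection error `‖I − S_X‖_{H → C_b}`
    (CS : ℝ) (hCS : ∀ g : H, ∀ z ∈ Ω, |ev g z - ev (S g) z| ≤ CS * ‖g‖) :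
    ∀ f : H, ∀ z ∈ Ω,
      |ev (Koop f) z - ev (S (Koop (S f))) z| ≤ (1 + CK) * CS * ‖f‖ :=
  kEDMD_deterministic_error_bound_general Ω ρ hρΩ ev Φ d x S hSmem hSorth Koop hKoop CK hCK CS hCS
end

section
/- Let ε > 0 and draw m i.i.d. samples from each ρ_{x_j}, j = 1,…,d, independently. Then for every f ∈ H, with probability at least 1 − 2d · exp( − m ε² / (2 ‖k‖_∞) ), the Monte Carlo kernel EDMD approximant satisfies ‖(\hat{K}^{MC} − \hat{K}) f‖_∞ ≤ ε · ‖k‖_∞^{1/2} · ( max_{v∈𝟙} vᵀ K_X^{-1} v )^{1/2} · ‖f‖_H. -/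
open MeasureTheory ProbabilityTheory Matrix
open scoped RealInnerProductSpace

noncomputable section

/-- The kernel matrix `K_X = (k(x_i,x_j))_{i,j}` built from the feature map `Φ`. -/
def kerMatrix {n : ℕ} {H : Type*} [NormedAddCommGroup H] [InnerProductSpace ℝ H]
    (Φ : EuclideanSpace ℝ (Fin n) → H) (d : ℕ) (x : Fin d → EuclideanSpace ℝ (Fin n)) :
    Matrix (Fin d) (Fin d) ℝ :=
  Matrix.of fun i j => ⟪Φ (x i), Φ (x j)⟫

/-- The kernel vector `k_X(z) = (k(x_1,z),…,k(x_d,z))ᵀ`. -/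
def kerVec {n : ℕ} {H : Type*} [NormedAddCommGroup H] [InnerProductSpace ℝ H]
    (Φ : EuclideanSpace ℝ (Fin n) → H) (d : ℕ) (x : Fin d → EuclideanSpace ℝ (Fin n))
    (z : EuclideanSpace ℝ (Fin n)) : Fin d → ℝ :=
  fun i => ⟪Φ (x i), Φ z⟫

/-- The exact propagation matrix `(K_{X,Y})_{ij} = ∫_Ω k(x_i,y) dρ_{x_j}(y)`. -/
def propMatrix {n : ℕ} {H : Type*} [NormedAddCommGroup H] [InnerProductSpace ℝ H]
    (Ω : Set (EuclideanSpace ℝ (Fin n)))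
    (ρ : ProbabilityTheory.Kernel (EuclideanSpace ℝ (Fin n)) (EuclideanSpace ℝ (Fin n)))
    (Φ : EuclideanSpace ℝ (Fin n) → H) (d : ℕ) (x : Fin d → EuclideanSpace ℝ (Fin n)) :
    Matrix (Fin d) (Fin d) ℝ :=
  Matrix.of fun i j => ∫ y in Ω, ⟪Φ (x i), Φ y⟫ ∂(ρ (x j))

/-- The Monte Carlo propagation matrix
`(K^{MC}_{X,Y})_{ij} = (1/m) ∑_{l=1}^m k(x_i, y_{l,j})` at the sample point `θ`. -/
def propMatrixMC {n : ℕ} {H : Type*} [NormedAddCommGroup H] [InnerProductSpace ℝ H]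
    (Φ : EuclideanSpace ℝ (Fin n) → H) (d : ℕ) (x : Fin d → EuclideanSpace ℝ (Fin n))
    (m : ℕ) {Θ : Type*} (Y : Fin m × Fin d → Θ → EuclideanSpace ℝ (Fin n)) (θ : Θ) :
    Matrix (Fin d) (Fin d) ℝ :=
  Matrix.of fun i j => (1 / (m : ℝ)) * ∑ l : Fin m, ⟪Φ (x i), Φ (Y (l, j) θ)⟫

/-!
Let `a = K_X⁻¹ f_X` and `g = ∑ᵢ aᵢ Φ(xᵢ)`. Since `⟪g, Φ(xᵢ)⟫ = f(xᵢ)`, `g` is the orthogonal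
projection of `f` onto `span Φ(X)`, so `‖g‖ ≤ ‖f‖` and `|g| ≤ ‖f‖ ‖k‖_∞^{1/2}` on `Ω`.
Column `j` of `aᵀ K^{MC}_{X,Y}` is the empirical mean of `g(y_{1,j}), …, g(y_{m,j})`, and the same
column of `aᵀ K_{X,Y}` is its expectation under `ρ_{x_j}`; so by Hoeffding's inequality and a union
bound over `j`, with probability at least `1 - 2d exp(-mε²/(2‖k‖_∞))` every column deviation `δⱼ`
is below `ε ‖f‖`. On that event the error at `z` is `δ ⬝ b` with `b = K_X⁻¹ k_X(z)`, and
`∑ⱼ |bⱼ| = w ⬝ b` for a sign vector `w`; this is `⟪∑ᵢ (K_X⁻¹ w)ᵢ Φ(xᵢ), Φ(z)⟫`, at most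
`(wᵀ K_X⁻¹ w)^{1/2} ‖k‖_∞^{1/2}` by Cauchy–Schwarz.
-/

theorem ae_forall_mem_of_map_eq {Θ ι α : Type*} [MeasurableSpace Θ] [MeasurableSpace α]
    [Countable ι] {P : Measure Θ} {Y : ι → Θ → α} (hY : ∀ p, AEMeasurable (Y p) P)
    {μ : ι → Measure α} (hlaw : ∀ p, P.map (Y p) = μ p) {s : Set α} (hs : ∀ p, μ p sᶜ = 0) :
    ∀ᵐ θ ∂P, ∀ p, Y p θ ∈ s :=
  ae_all_iff.mpr fun p => ae_of_ae_map (hY p) ((hlaw p).symm ▸ mem_ae_iff.mpr (hs p))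

section Concentration

variable {Θ : Type*} [MeasurableSpace Θ] {P : Measure Θ} [IsProbabilityMeasure P]

theorem ofReal_one_sub_le_measure_of_measure_compl_le {s : Set Θ} {r : ℝ} (hr : 0 ≤ r)
    (h : P sᶜ ≤ ENNReal.ofReal r) : ENNReal.ofReal (1 - r) ≤ P s := by
  rw [ENNReal.ofReal_sub _ hr, ENNReal.ofReal_one, tsub_le_iff_right]
  calc 1 = P Set.univ := measure_univ.symm
    _ ≤ P s + P sᶜ := measure_univ_le_add_compl s
    _ ≤ P s + ENNReal.ofReal r := by gcongr

theorem measure_le_abs_sum_sub_integral_le {ι : Type*} [Fintype ι] {X : ι → Θ → ℝ}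
    (hX : ∀ i, Measurable (X i)) (hindep : iIndepFun X P) {c : ℝ}
    (hXc : ∀ i, ∀ᵐ θ ∂P, |X i θ| ≤ c) {t : ℝ} (ht : 0 ≤ t) :
    P {θ | t ≤ |∑ i, (X i θ - P[X i])|} ≤
      ENNReal.ofReal (2 * Real.exp (-t ^ 2 / (2 * (Fintype.card ι * c ^ 2)))) := by
  set Z : ι → Θ → ℝ := fun i θ => X i θ - P[X i]
  have hZ : ∀ i, HasSubgaussianMGF (Z i) (‖c‖₊ ^ 2) P := fun i => by
    have := hasSubgaussianMGF_of_mem_Icc (hX i).aemeasurable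
      ((hXc i).mono fun θ hθ => abs_le.mp hθ)
    convert this using 2
    rw [sub_neg_eq_add, ← two_mul, nnnorm_mul]
    simp
  have hZindep : iIndepFun Z P :=
    (hindep.comp (fun i (y : ℝ) => y - P[X i]) fun i => measurable_id.sub_const _ :)
  have htail : ∀ Z : ι → Θ → ℝ, iIndepFun Z P → (∀ i, HasSubgaussianMGF (Z i) (‖c‖₊ ^ 2) P) →
      P {θ | t ≤ ∑ i, Z i θ} ≤
        ENNReal.ofReal (Real.exp (-t ^ 2 / (2 * (Fintype.card ι * c ^ 2)))) := by
    intro Z hind hsub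
    rw [← ofReal_measureReal]
    refine ENNReal.ofReal_le_ofReal ?_
    convert HasSubgaussianMGF.measure_sum_ge_le_of_iIndepFun hind (fun i _ => hsub i) ht using 4
    simp
  calc P {θ | t ≤ |∑ i, Z i θ|}
      ≤ P ({θ | t ≤ ∑ i, Z i θ} ∪ {θ | t ≤ ∑ i, (-Z i) θ}) := by
        refine measure_mono fun θ hθ => ?_
        simp only [Set.mem_ofPred_eq, Set.mem_union, Pi.neg_apply, Finset.sum_neg_distrib] at hθ ⊢
        exact (le_abs'.mp hθ).symm.imp_right le_neg_of_le_neg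
    _ ≤ _ := (measure_union_le _ _).trans <| by
        rw [two_mul, ENNReal.ofReal_add (by positivity) (by positivity)]
        exact add_le_add (htail Z hZindep hZ)
          (htail _ (hZindep.comp (fun _ => Neg.neg) fun _ => measurable_neg) fun i => (hZ i).neg)

theorem measure_le_abs_sampleMean_sub_integral_le {α : Type*} [MeasurableSpace α] {m : ℕ}
    (hm : 1 ≤ m) {Y : Fin m → Θ → α} (hY : ∀ l, Measurable (Y l)) (hindep : iIndepFun Y P)
    {ν : Measure α} (hlaw : ∀ l, P.map (Y l) = ν) {q : α → ℝ} (hq : Measurable q) {c : ℝ}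
    (hqc : ∀ y, |q y| ≤ c) {t : ℝ} (ht : 0 ≤ t) :
    P {θ | t ≤ |1 / (m : ℝ) * ∑ l, q (Y l θ) - ∫ y, q y ∂ν|} ≤
      ENNReal.ofReal (2 * Real.exp (-m * t ^ 2 / (2 * c ^ 2))) := by
  have hm0 : (0 : ℝ) < m := by exact_mod_cast hm
  have hmean : ∀ l, P[fun θ => q (Y l θ)] = ∫ y, q y ∂ν := fun l => by
    rw [← hlaw l, integral_map (hY l).aemeasurable hq.aestronglyMeasurable]
  have hoeffding := measure_le_abs_sum_sub_integral_le (fun l => hq.comp (hY l))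
    (hindep.comp (fun _ => q) fun _ => hq) (fun l => ae_of_all _ fun θ => hqc _)
    (mul_nonneg hm0.le ht)
  convert hoeffding using 3
  · ext θ
    have hsum : 1 / (m : ℝ) * ∑ l, q (Y l θ) - ∫ y, q y ∂ν =
        (∑ l, (q (Y l θ) - P[fun θ => q (Y l θ)])) / m := by
      simp only [hmean, Finset.sum_sub_distrib, Finset.sum_const, Finset.card_univ,
        Fintype.card_fin, nsmul_eq_mul]
      field_simp
    rw [hsum, abs_div, Nat.abs_cast, le_div_iff₀ hm0, mul_comm]
    rfl
  · rw [Fintype.card_fin]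
    congr 1
    calc -m * t ^ 2 / (2 * c ^ 2) = m * (-m * t ^ 2) / (m * (2 * c ^ 2)) :=
          (mul_div_mul_left _ _ hm0.ne').symm
      _ = -(m * t) ^ 2 / (2 * (m * c ^ 2)) := by ring

theorem ofReal_one_sub_le_measure_forall_abs_sampleMean_sub_integral_lt
    {α κ : Type*} [MeasurableSpace α] [Fintype κ] {m : ℕ} (hm : 1 ≤ m)
    {Y : Fin m × κ → Θ → α} (hY : ∀ p, Measurable (Y p)) (hindep : iIndepFun Y P)
    {ν : κ → Measure α} (hlaw : ∀ l j, P.map (Y (l, j)) = ν j)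
    {q : α → ℝ} (hq : Measurable q) {c : ℝ} (hqc : ∀ y, |q y| ≤ c) {t : ℝ} (ht : 0 ≤ t) :
    ENNReal.ofReal (1 - 2 * Fintype.card κ * Real.exp (-m * t ^ 2 / (2 * c ^ 2))) ≤
      P {θ | ∀ j, |1 / (m : ℝ) * ∑ l, q (Y (l, j) θ) - ∫ y, q y ∂ν j| < t} := by
  refine ofReal_one_sub_le_measure_of_measure_compl_le (by positivity) ?_
  calc P {θ | ∀ j, |1 / (m : ℝ) * ∑ l, q (Y (l, j) θ) - ∫ y, q y ∂ν j| < t}ᶜ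
      = P (⋃ j, {θ | t ≤ |1 / (m : ℝ) * ∑ l, q (Y (l, j) θ) - ∫ y, q y ∂ν j|}) := by
        congr 1; ext θ; simp
    _ ≤ ∑ j, P {θ | t ≤ |1 / (m : ℝ) * ∑ l, q (Y (l, j) θ) - ∫ y, q y ∂ν j|} :=
        measure_iUnion_fintype_le _ _
    _ ≤ ∑ _j : κ, ENNReal.ofReal (2 * Real.exp (-m * t ^ 2 / (2 * c ^ 2))) :=
        Finset.sum_le_sum fun j _ => measure_le_abs_sampleMean_sub_integral_le hm
          (fun l => hY (l, j)) (hindep.precomp (Prod.mk_left_injective j)) (fun l => hlaw l j)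
          hq hqc ht
    _ = _ := by
        rw [Finset.sum_const, nsmul_eq_mul, Finset.card_univ, ← ENNReal.ofReal_natCast,
          ← ENNReal.ofReal_mul (by positivity)]
        ring_nf

end Concentration

theorem exists_abs_eq_one_dotProduct_eq_sum_abs {ι : Type*} [Fintype ι] (b : ι → ℝ) :
    ∃ w : ι → ℝ, (∀ i, |w i| = 1) ∧ w ⬝ᵥ b = ∑ i, |b i| := by
  refine ⟨fun i => if 0 ≤ b i then 1 else -1, fun i => by dsimp only; split_ifs <;> simp, ?_⟩
  refine Finset.sum_congr rfl fun i _ => ?_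
  dsimp only
  split_ifs with h
  · rw [one_mul, abs_of_nonneg h]
  · rw [abs_of_neg (not_le.mp h), neg_one_mul]

theorem bddAbove_setOf_abs_eq_one {ι : Type*} [Finite ι] (F : (ι → ℝ) → ℝ) :
    BddAbove {r | ∃ w : ι → ℝ, (∀ i, |w i| = 1) ∧ r = F w} := by
  have hsigns : {w : ι → ℝ | ∀ i, w i ∈ ({-1, 1} : Set ℝ)}.Finite :=
    Set.Finite.pi' fun _ => (Set.finite_singleton 1).insert (-1)
  refine ((hsigns.image F).subset ?_).bddAbove
  rintro r ⟨w, hw, rfl⟩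
  refine ⟨w, fun i => ?_, rfl⟩
  rcases abs_eq_abs.mp ((hw i).trans abs_one.symm) with h | h <;> simp [h]

theorem abs_dotProduct_le_mul_sum_abs {ι : Type*} [Fintype ι] {δ : ι → ℝ} {t : ℝ}
    (hδ : ∀ i, |δ i| ≤ t) (b : ι → ℝ) : |δ ⬝ᵥ b| ≤ t * ∑ i, |b i| := by
  rw [Finset.mul_sum]
  refine (Finset.abs_sum_le_sum_abs _ _).trans (Finset.sum_le_sum fun i _ => ?_)
  rw [abs_mul]
  exact mul_le_mul_of_nonneg_right (hδ i) (abs_nonneg _)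

section Gram

variable {H : Type*} [NormedAddCommGroup H] [InnerProductSpace ℝ H]

theorem norm_le_sqrt_of_abs_inner_self_le {u : H} {M : ℝ} (h : |⟪u, u⟫| ≤ M) : ‖u‖ ≤ √M := by
  rw [norm_eq_sqrt_real_inner]
  exact Real.sqrt_le_sqrt ((le_abs_self _).trans h)

theorem abs_indicator_inner_le {α : Type*} {s : Set α} {F : α → H} {C : ℝ} (hC : 0 ≤ C)
    (hF : ∀ y ∈ s, ‖F y‖ ≤ C) (g : H) (y : α) :
    |s.indicator (fun y => ⟪g, F y⟫) y| ≤ ‖g‖ * C := by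
  by_cases hy : y ∈ s
  · rw [Set.indicator_of_mem hy]
    exact (abs_real_inner_le_norm _ _).trans (mul_le_mul_of_nonneg_left (hF y hy) (norm_nonneg _))
  · rw [Set.indicator_of_notMem hy, abs_zero]
    positivity

theorem integrableOn_inner_of_continuousOn {α : Type*} [TopologicalSpace α] [MeasurableSpace α]
    [OpensMeasurableSpace α] {μ : Measure α} [IsFiniteMeasure μ] {s : Set α} {F : α → H}
    (hs : MeasurableSet s) (hF : ContinuousOn F s) {h : H} {M : ℝ}
    (hM : ∀ y ∈ s, |⟪h, F y⟫| ≤ M) : IntegrableOn (fun y => ⟪h, F y⟫) s μ :=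
  (integrable_const M).mono' ((continuousOn_const.inner hF).aestronglyMeasurable hs)
    ((ae_restrict_iff' hs).mpr (ae_of_all _ hM))

variable {ι : Type*} [Fintype ι] {v : ι → H}

theorem gram_mulVec_apply (v : ι → H) (a : ι → ℝ) (i : ι) :
    (gram ℝ v *ᵥ a) i = ⟪v i, ∑ j, a j • v j⟫ := by
  simp [mulVec, dotProduct, gram_apply, inner_sum, real_inner_smul_right, mul_comm]

variable [DecidableEq ι]

/-- The kernel interpolant of the data `u`: the element of `span (range v)` whose inner product
with each `v i` is `u i`. -/
def gramInterpolant (v : ι → H) (u : ι → ℝ) : H := ∑ i, ((gram ℝ v)⁻¹ *ᵥ u) i • v i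

theorem inner_gramInterpolant (hv : IsUnit (gram ℝ v).det) (u : ι → ℝ) (i : ι) :
    ⟪v i, gramInterpolant v u⟫ = u i := by
  rw [gramInterpolant, ← gram_mulVec_apply, mulVec_mulVec, mul_nonsing_inv _ hv, one_mulVec]

theorem vecMul_inv_gram (v : ι → H) (w : ι → ℝ) : w ᵥ* (gram ℝ v)⁻¹ = (gram ℝ v)⁻¹ *ᵥ w := by
  rw [← vecMul_transpose, transpose_nonsing_inv, ← conjTranspose_eq_transpose_of_trivial,
    (isHermitian_gram ℝ v).eq]

theorem dotProduct_inv_gram_mulVec_inner (w : ι → ℝ) (y : H) :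
    w ⬝ᵥ ((gram ℝ v)⁻¹ *ᵥ fun i => ⟪v i, y⟫) = ⟪gramInterpolant v w, y⟫ := by
  rw [dotProduct_mulVec, vecMul_inv_gram, gramInterpolant, sum_inner]
  simp [real_inner_smul_left, dotProduct]

theorem norm_sq_gramInterpolant (hv : IsUnit (gram ℝ v).det) (w : ι → ℝ) :
    ‖gramInterpolant v w‖ ^ 2 = w ⬝ᵥ ((gram ℝ v)⁻¹ *ᵥ w) := by
  rw [← real_inner_self_eq_norm_sq, gramInterpolant, ← star_dotProduct_gram_mulVec, star_trivial,
    mulVec_mulVec, mul_nonsing_inv _ hv, one_mulVec, dotProduct_comm]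

theorem norm_gramInterpolant_inner_le (hv : IsUnit (gram ℝ v).det) (f : H) :
    ‖gramInterpolant v fun i => ⟪f, v i⟫‖ ≤ ‖f‖ := by
  set g := gramInterpolant v fun i => ⟪f, v i⟫ with hg
  have horth : ⟪g, f - g⟫ = 0 := by
    nth_rw 1 [hg]
    rw [gramInterpolant, sum_inner]
    refine Finset.sum_eq_zero fun i _ => ?_
    rw [real_inner_smul_left, inner_sub_right, inner_gramInterpolant hv, real_inner_comm,
      sub_self, mul_zero]
  have hpyth := norm_add_sq_eq_norm_sq_add_norm_sq_real horth
  rw [add_sub_cancel] at hpyth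
  nlinarith [norm_nonneg g, norm_nonneg f, sq_nonneg ‖f - g‖]

theorem sum_abs_inv_gram_mulVec_inner_le (hv : IsUnit (gram ℝ v).det) (y : H) :
    ∑ i, |((gram ℝ v)⁻¹ *ᵥ fun i => ⟪v i, y⟫) i| ≤
      √(sSup {r | ∃ w : ι → ℝ, (∀ i, |w i| = 1) ∧ r = w ⬝ᵥ ((gram ℝ v)⁻¹ *ᵥ w)}) * ‖y‖ := by
  obtain ⟨w, hw, hwb⟩ := exists_abs_eq_one_dotProduct_eq_sum_abs ((gram ℝ v)⁻¹ *ᵥ fun i => ⟪v i, y⟫)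
  calc ∑ i, |((gram ℝ v)⁻¹ *ᵥ fun i => ⟪v i, y⟫) i| = ⟪gramInterpolant v w, y⟫ := by
        rw [← hwb, dotProduct_inv_gram_mulVec_inner]
    _ ≤ ‖gramInterpolant v w‖ * ‖y‖ := real_inner_le_norm _ _
    _ = √(w ⬝ᵥ ((gram ℝ v)⁻¹ *ᵥ w)) * ‖y‖ := by
        rw [← norm_sq_gramInterpolant hv, Real.sqrt_sq (norm_nonneg _)]
    _ ≤ _ := by
        gcongr
        exact le_csSup (bddAbove_setOf_abs_eq_one _) ⟨w, hw, rfl⟩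

theorem abs_dotProduct_inv_gram_mulVec_sub_le (hv : IsUnit (gram ℝ v).det) (u : ι → ℝ) (y : H)
    (M₁ M₂ : Matrix ι ι ℝ) {t : ℝ} (ht : 0 ≤ t)
    (hM : ∀ j, |(((gram ℝ v)⁻¹ *ᵥ u) ᵥ* M₁ - ((gram ℝ v)⁻¹ *ᵥ u) ᵥ* M₂) j| ≤ t) :
    |u ⬝ᵥ ((gram ℝ v)⁻¹ *ᵥ (M₁ *ᵥ ((gram ℝ v)⁻¹ *ᵥ fun i => ⟪v i, y⟫))) -
        u ⬝ᵥ ((gram ℝ v)⁻¹ *ᵥ (M₂ *ᵥ ((gram ℝ v)⁻¹ *ᵥ fun i => ⟪v i, y⟫)))| ≤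
      t * √(sSup {r | ∃ w : ι → ℝ, (∀ i, |w i| = 1) ∧ r = w ⬝ᵥ ((gram ℝ v)⁻¹ *ᵥ w)}) * ‖y‖ := by
  rw [dotProduct_mulVec u _ (M₁ *ᵥ _), dotProduct_mulVec u _ (M₂ *ᵥ _), vecMul_inv_gram,
    dotProduct_mulVec _ M₁, dotProduct_mulVec _ M₂, ← sub_dotProduct, mul_assoc]
  exact (abs_dotProduct_le_mul_sum_abs hM _).trans
    (mul_le_mul_of_nonneg_left (sum_abs_inv_gram_mulVec_inner_le hv y) ht)

end Gram

section Propagation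

variable {n d : ℕ} {H : Type*} [NormedAddCommGroup H] [InnerProductSpace ℝ H]
  {Φ : EuclideanSpace ℝ (Fin n) → H} {x : Fin d → EuclideanSpace ℝ (Fin n)}
  {Ω : Set (EuclideanSpace ℝ (Fin n))}
  {ρ : Kernel (EuclideanSpace ℝ (Fin n)) (EuclideanSpace ℝ (Fin n))}
  {m : ℕ} {Θ : Type*} {Y : Fin m × Fin d → Θ → EuclideanSpace ℝ (Fin n)}

theorem kerMatrix_eq_gram : kerMatrix Φ d x = gram ℝ (Φ ∘ x) := rfl

theorem vecMul_propMatrixMC (θ : Θ) (a : Fin d → ℝ) :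
    a ᵥ* propMatrixMC Φ d x m Y θ =
      fun j => 1 / (m : ℝ) * ∑ l, ⟪∑ i, a i • Φ (x i), Φ (Y (l, j) θ)⟫ := by
  ext j
  simp only [vecMul, dotProduct, propMatrixMC, of_apply, sum_inner, real_inner_smul_left,
    Finset.mul_sum]
  rw [Finset.sum_comm]
  exact Finset.sum_congr rfl fun l _ => Finset.sum_congr rfl fun i _ => by ring

theorem vecMul_propMatrix (hint : ∀ i j, IntegrableOn (fun y => ⟪Φ (x i), Φ y⟫) Ω (ρ (x j)))
    (a : Fin d → ℝ) :
    a ᵥ* propMatrix Ω ρ Φ d x = fun j => ∫ y in Ω, ⟪∑ i, a i • Φ (x i), Φ y⟫ ∂ρ (x j) := by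
  ext j
  simp only [vecMul, dotProduct, propMatrix, of_apply, sum_inner, real_inner_smul_left]
  rw [integral_finsetSum _ fun i _ => (hint i j).const_mul (a i)]
  exact Finset.sum_congr rfl fun i _ => (integral_const_mul _ _).symm

/-- Off `Ω` nothing is known about `Φ`, so the observable `⟪g, Φ ·⟫` is replaced by its indicator
on `Ω`, which agrees with it at samples lying in `Ω`. -/
theorem vecMul_propMatrixMC_sub_vecMul_propMatrix_apply (hΩ : MeasurableSet Ω)
    (hint : ∀ i j, IntegrableOn (fun y => ⟪Φ (x i), Φ y⟫) Ω (ρ (x j))) (a : Fin d → ℝ) {θ : Θ}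
    (hθ : ∀ p, Y p θ ∈ Ω) (j : Fin d) :
    (a ᵥ* propMatrixMC Φ d x m Y θ - a ᵥ* propMatrix Ω ρ Φ d x) j =
      1 / (m : ℝ) * ∑ l, Ω.indicator (fun y => ⟪∑ i, a i • Φ (x i), Φ y⟫) (Y (l, j) θ) -
        ∫ y, Ω.indicator (fun y => ⟪∑ i, a i • Φ (x i), Φ y⟫) y ∂ρ (x j) := by
  rw [vecMul_propMatrixMC, vecMul_propMatrix hint, Pi.sub_apply, integral_indicator hΩ]
  simp only [Set.indicator_of_mem (hθ _)]

end Propagation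

theorem kEDMD_monte_carlo_error_bound_general
    {n : ℕ}
    (Ω : Set (EuclideanSpace ℝ (Fin n)))
    (hΩne : Ω.Nonempty) (hΩopen : IsOpen Ω)
    (ρ : ProbabilityTheory.Kernel (EuclideanSpace ℝ (Fin n)) (EuclideanSpace ℝ (Fin n)))
    [IsMarkovKernel ρ] (hρΩ : ∀ x ∈ Ω, ρ x Ω = 1)
    {H : Type*} [NormedAddCommGroup H] [InnerProductSpace ℝ H]
    (ev : H →ₗ[ℝ] (EuclideanSpace ℝ (Fin n) → ℝ))
    (Φ : EuclideanSpace ℝ (Fin n) → H)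
    (hrepr : ∀ (f : H), ∀ x ∈ Ω, ev f x = ⟪f, Φ x⟫)
    (hΦcont : ContinuousOn Φ Ω)
    (Mk : ℝ) (hMk : ∀ x ∈ Ω, ∀ y ∈ Ω, |⟪Φ x, Φ y⟫| ≤ Mk)
    (d : ℕ) (x : Fin d → EuclideanSpace ℝ (Fin n))
    (hxΩ : ∀ i, x i ∈ Ω)
    (hKXpos : (kerMatrix Φ d x).PosDef)
    -- the i.i.d. samples `y_{l,j} ∼ ρ_{x_j}`, independent across all indices
    (m : ℕ) (hm : 1 ≤ m)
    {Θ : Type*} [MeasurableSpace Θ] (P : Measure Θ) [IsProbabilityMeasure P]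
    (Y : Fin m × Fin d → Θ → EuclideanSpace ℝ (Fin n))
    (hYmeas : ∀ p, Measurable (Y p))
    (hYindep : ProbabilityTheory.iIndepFun
      Y P)
    (hYlaw : ∀ (l : Fin m) (j : Fin d), Measure.map (Y (l, j)) P = ρ (x j))
    (f : H)
    (ε : ℝ) (hε : 0 < ε) :
    ENNReal.ofReal (1 - 2 * d * Real.exp (-(m : ℝ) * ε ^ 2 / (2 * Mk))) ≤
      P {θ : Θ | ∀ z ∈ Ω,
        |(fun j => ev f (x j)) ⬝ᵥ
            ((kerMatrix Φ d x)⁻¹ *ᵥ (propMatrixMC Φ d x m Y θ *ᵥ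
              ((kerMatrix Φ d x)⁻¹ *ᵥ kerVec Φ d x z))) -
          (fun j => ev f (x j)) ⬝ᵥ
            ((kerMatrix Φ d x)⁻¹ *ᵥ (propMatrix Ω ρ Φ d x *ᵥ
              ((kerMatrix Φ d x)⁻¹ *ᵥ kerVec Φ d x z)))| ≤
          ε * Real.sqrt Mk *
            Real.sqrt (sSup {r : ℝ | ∃ v : Fin d → ℝ,
              (∀ i, |v i| = 1) ∧ r = v ⬝ᵥ ((kerMatrix Φ d x)⁻¹ *ᵥ v)}) *
            ‖f‖} := by
  classical
  rcases eq_or_ne f 0 with rfl | hf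
  · have hr : 0 ≤ 2 * (d : ℝ) * Real.exp (-(m : ℝ) * ε ^ 2 / (2 * Mk)) := by positivity
    calc _ ≤ 1 := ENNReal.ofReal_le_one.mpr (by linarith)
      _ = P Set.univ := measure_univ.symm
      _ ≤ _ := by
        refine measure_mono fun θ _ z _ => ?_
        simp
  have hΩ : MeasurableSet Ω := hΩopen.measurableSet
  have hK : IsUnit (gram ℝ (Φ ∘ x)).det := (isUnit_iff_isUnit_det _).mp hKXpos.isUnit
  obtain ⟨z₀, hz₀⟩ := hΩne
  have hMk0 : 0 ≤ Mk := (abs_nonneg _).trans (hMk z₀ hz₀ z₀ hz₀)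
  have hΦ : ∀ z ∈ Ω, ‖Φ z‖ ≤ √Mk := fun z hz => norm_le_sqrt_of_abs_inner_self_le (hMk z hz z hz)
  have hint i j := integrableOn_inner_of_continuousOn (μ := ρ (x j)) hΩ hΦcont (hMk _ (hxΩ i))
  have hg : ‖gramInterpolant (Φ ∘ x) fun j => ev f (x j)‖ ≤ ‖f‖ := by
    rw [show (fun j => ev f (x j)) = fun j => ⟪f, Φ (x j)⟫ from funext fun j => hrepr f _ (hxΩ j)]
    exact norm_gramInterpolant_inner_le hK f
  have hcols := ofReal_one_sub_le_measure_forall_abs_sampleMean_sub_integral_lt hm hYmeas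
    hYindep hYlaw ((continuousOn_const.inner hΦcont).measurable_piecewise continuousOn_const hΩ)
    (fun y => (abs_indicator_inner_le (Real.sqrt_nonneg _) hΦ _ y).trans
      (mul_le_mul_of_nonneg_right hg (Real.sqrt_nonneg _))) (t := ε * ‖f‖) (by positivity)
  have hexp : -(m : ℝ) * (ε * ‖f‖) ^ 2 / (2 * (‖f‖ * √Mk) ^ 2) = -m * ε ^ 2 / (2 * Mk) := by
    rw [mul_pow, mul_pow, Real.sq_sqrt hMk0]
    calc _ = -m * ε ^ 2 * ‖f‖ ^ 2 / (2 * Mk * ‖f‖ ^ 2) := by ring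
      _ = _ := mul_div_mul_right _ _ (by positivity)
  rw [hexp, Fintype.card_fin] at hcols
  refine hcols.trans (measure_mono_ae ?_)
  filter_upwards [ae_forall_mem_of_map_eq (fun p => (hYmeas p).aemeasurable)
    (fun p => hYlaw p.1 p.2) fun p => (prob_compl_eq_zero_iff hΩ).mpr (hρΩ _ (hxΩ p.2))]
    with θ hθ hdev z hz
  rw [kerMatrix_eq_gram]
  calc _ ≤ ε * ‖f‖ * _ * ‖Φ z‖ := abs_dotProduct_inv_gram_mulVec_sub_le hK _ (Φ z) _ _
        (by positivity) fun j => by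
          rw [vecMul_propMatrixMC_sub_vecMul_propMatrix_apply hΩ hint _ hθ]
          exact (hdev j).le
    _ ≤ ε * ‖f‖ * _ * √Mk := by gcongr; exact hΦ z hz
    _ = _ := by ring

/-- (Monte Carlo error bound.) With `m` i.i.d. samples from each
`ρ_{x_j}`, for every `f ∈ H`, with probability at least `1 − 2d·exp(−mε²/(2‖k‖_∞))`,
the Monte Carlo kernel EDMD approximant satisfies
`‖(K̂^{MC} − K̂) f‖_∞ ≤ ε · ‖k‖_∞^{1/2} · (max_{v∈𝟙} vᵀ K_X⁻¹ v)^{1/2} · ‖f‖_H`. -/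
theorem kEDMD_monte_carlo_error_bound
    {n : ℕ} (hn : 1 ≤ n)
    (Ω : Set (EuclideanSpace ℝ (Fin n)))
    (hΩne : Ω.Nonempty) (hΩopen : IsOpen Ω) (hΩbdd : Bornology.IsBounded Ω)
    (ρ : ProbabilityTheory.Kernel (EuclideanSpace ℝ (Fin n)) (EuclideanSpace ℝ (Fin n)))
    [IsMarkovKernel ρ] (hρΩ : ∀ x ∈ Ω, ρ x Ω = 1)
    {H : Type*} [NormedAddCommGroup H] [InnerProductSpace ℝ H] [CompleteSpace H]
    (ev : H →ₗ[ℝ] (EuclideanSpace ℝ (Fin n) → ℝ))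
    (Φ : EuclideanSpace ℝ (Fin n) → H)
    (hrepr : ∀ (f : H), ∀ x ∈ Ω, ev f x = ⟪f, Φ x⟫)
    (hΦcont : ContinuousOn Φ Ω)
    (Mk : ℝ) (hMk : ∀ x ∈ Ω, ∀ y ∈ Ω, |⟪Φ x, Φ y⟫| ≤ Mk)
    (d : ℕ) (hd : 1 ≤ d) (x : Fin d → EuclideanSpace ℝ (Fin n))
    (hxΩ : ∀ i, x i ∈ Ω) (hxinj : Function.Injective x)
    (hKXpos : (kerMatrix Φ d x).PosDef)
    -- the i.i.d. samples `y_{l,j} ∼ ρ_{x_j}`, independent across all indices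
    (m : ℕ) (hm : 1 ≤ m)
    {Θ : Type*} [MeasurableSpace Θ] (P : Measure Θ) [IsProbabilityMeasure P]
    (Y : Fin m × Fin d → Θ → EuclideanSpace ℝ (Fin n))
    (hYmeas : ∀ p, Measurable (Y p))
    (hYindep : ProbabilityTheory.iIndepFun
      Y P)
    (hYlaw : ∀ (l : Fin m) (j : Fin d), Measure.map (Y (l, j)) P = ρ (x j))
    (f : H)
    (ε : ℝ) (hε : 0 < ε) :
    ENNReal.ofReal (1 - 2 * d * Real.exp (-(m : ℝ) * ε ^ 2 / (2 * Mk))) ≤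
      P {θ : Θ | ∀ z ∈ Ω,
        |(fun j => ev f (x j)) ⬝ᵥ
            ((kerMatrix Φ d x)⁻¹ *ᵥ (propMatrixMC Φ d x m Y θ *ᵥ
              ((kerMatrix Φ d x)⁻¹ *ᵥ kerVec Φ d x z))) -
          (fun j => ev f (x j)) ⬝ᵥ
            ((kerMatrix Φ d x)⁻¹ *ᵥ (propMatrix Ω ρ Φ d x *ᵥ
              ((kerMatrix Φ d x)⁻¹ *ᵥ kerVec Φ d x z)))| ≤
          ε * Real.sqrt Mk *
            Real.sqrt (sSup {r : ℝ | ∃ v : Fin d → ℝ,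
              (∀ i, |v i| = 1) ∧ r = v ⬝ᵥ ((kerMatrix Φ d x)⁻¹ *ᵥ v)}) *
            ‖f‖} :=
  kEDMD_monte_carlo_error_bound_general Ω hΩne hΩopen ρ hρΩ ev Φ hrepr hΦcont Mk hMk d x hxΩ hKXpos
    m hm P Y hYmeas hYindep hYlaw f ε hε

end
end

section
/- For every x ∈ Ω, the ℓ²-norm of K_X^{-1} k_X(x) satisfies ‖K_X^{-1} k_X(x)‖₂ = sup{ |f(x)| / ‖f_X‖₂ : f ∈ V_X, f ≠ 0 } ≤ ‖k‖_∞^{1/2} · ‖K_X^{-1}‖_{2→2}^{1/2}, where ‖K_X^{-1}‖_{2→2} is the spectral norm of K_X^{-1}. -/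
/-!
Writing `f = ∑ cᵢ Φ(xᵢ)`, one has `f_X = K_X c` and `f(x) = ⟨f_X, w⟩` with `w = K_X⁻¹ k_X(x)`,
and `c ↦ K_X c` is a bijection, so the supremum is the dual norm of `w`, i.e. `‖w‖₂`.
For the bound, `∑ wᵢ Φ(xᵢ)` is the orthogonal projection of `Φ(x)` onto `V_X`, so its norm is at
most `‖Φ(x)‖ ≤ ‖k‖_∞^{1/2}`, while `‖c‖₂² ≤ ‖K_X⁻¹‖ ‖∑ cᵢ Φ(xᵢ)‖²` for every `c` by
Cauchy–Schwarz: `‖c‖₂² = ⟨∑ cᵢ Φ(xᵢ), ∑ (K_X⁻¹ c)ᵢ Φ(xᵢ)⟩`, and the second factor has squared norm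
`⟨K_X⁻¹ c, c⟩ ≤ ‖K_X⁻¹‖ ‖c‖₂²`.
-/

open MeasureTheory Matrix
open scoped RealInnerProductSpace

noncomputable section

theorem Matrix.mulVec_nonsing_inv_mulVec {ι R : Type*} [Fintype ι] [DecidableEq ι] [CommRing R]
    {A : Matrix ι ι R} (hA : IsUnit A.det) (u : ι → R) : A *ᵥ (A⁻¹ *ᵥ u) = u := by
  rw [mulVec_mulVec, mul_nonsing_inv _ hA, one_mulVec]

open WithLp

theorem EuclideanSpace.norm_toLp_eq_sqrt_sum_sq {ι : Type*} [Fintype ι] (u : ι → ℝ) :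
    ‖toLp 2 u‖ = √(∑ i, u i ^ 2) := by
  simp [EuclideanSpace.norm_eq, sq_abs]

theorem sSup_abs_inner_div_norm {E : Type*} [NormedAddCommGroup E] [InnerProductSpace ℝ E]
    (w : E) : sSup {r : ℝ | ∃ u : E, u ≠ 0 ∧ r = |⟪u, w⟫| / ‖u‖} = ‖w‖ := by
  rcases eq_or_ne w 0 with rfl | hw
  · rw [norm_zero]
    apply le_antisymm (Real.sSup_nonpos _) (Real.sSup_nonneg _) <;>
      rintro r ⟨u, -, rfl⟩ <;> simp
  refine IsGreatest.csSup_eq ⟨⟨w, hw, ?_⟩, ?_⟩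
  · rw [real_inner_self_eq_norm_sq, abs_of_nonneg (by positivity), sq,
      mul_div_cancel_right₀ _ (norm_ne_zero_iff.2 hw)]
  · rintro r ⟨u, hu, rfl⟩
    rw [div_le_iff₀ (norm_pos_iff.2 hu), mul_comm]
    exact abs_real_inner_le_norm u w

section GramMatrix

variable {ι H : Type*} [Fintype ι] [NormedAddCommGroup H] [InnerProductSpace ℝ H] (v : ι → H)

theorem inner_sum_smul_left_eq_dotProduct (c : ι → ℝ) (y : H) :
    ⟪∑ i, c i • v i, y⟫ = c ⬝ᵥ fun i => ⟪v i, y⟫ := by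
  simp [sum_inner, real_inner_smul_left, dotProduct]

theorem inner_sum_smul_left_eq_gram_mulVec (c : ι → ℝ) (j : ι) :
    ⟪∑ i, c i • v i, v j⟫ = (gram ℝ v *ᵥ c) j := by
  rw [inner_sum_smul_left_eq_dotProduct, mulVec, dotProduct_comm]
  exact congrArg (· ⬝ᵥ c) (funext fun i => real_inner_comm (v j) (v i))

theorem inner_sum_smul_sum_smul (c c' : ι → ℝ) :
    ⟪∑ i, c i • v i, ∑ i, c' i • v i⟫ = c ⬝ᵥ gram ℝ v *ᵥ c' := by
  simpa using (star_dotProduct_gram_mulVec v c c').symm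

variable {v}

theorem inner_sum_smul_eq_inner_sum_smul_of_gram_mulVec_eq {w : ι → ℝ} {y : H}
    (hw : gram ℝ v *ᵥ w = fun i => ⟪v i, y⟫) (c : ι → ℝ) :
    ⟪∑ i, c i • v i, y⟫ = ⟪∑ i, c i • v i, ∑ i, w i • v i⟫ := by
  rw [inner_sum_smul_left_eq_dotProduct, inner_sum_smul_sum_smul, hw]

theorem norm_sum_smul_le_of_gram_mulVec_eq {w : ι → ℝ} {y : H}
    (hw : gram ℝ v *ᵥ w = fun i => ⟪v i, y⟫) : ‖∑ i, w i • v i‖ ≤ ‖y‖ := by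
  have hsq : ‖∑ i, w i • v i‖ ^ 2 ≤ ‖∑ i, w i • v i‖ * ‖y‖ := by
    rw [← real_inner_self_eq_norm_sq, ← inner_sum_smul_eq_inner_sum_smul_of_gram_mulVec_eq hw]
    exact real_inner_le_norm _ _
  nlinarith [norm_nonneg (∑ i, w i • v i), norm_nonneg y]

theorem norm_toLp_le_sqrt_mul_norm_sum_smul [DecidableEq ι] (hG : IsUnit (gram ℝ v).det)
    {C : ℝ} (hC : ∀ u : ι → ℝ, ‖toLp 2 ((gram ℝ v)⁻¹ *ᵥ u)‖ ≤ C * ‖toLp 2 u‖) (w : ι → ℝ) :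
    ‖toLp 2 w‖ ≤ √C * ‖∑ i, w i • v i‖ := by
  set c := (gram ℝ v)⁻¹ *ᵥ w
  have hc : gram ℝ v *ᵥ c = w := mulVec_nonsing_inv_mulVec hG w
  have hTc : ‖∑ i, c i • v i‖ ≤ √C * ‖toLp 2 w‖ := by
    rw [← Real.sqrt_sq (norm_nonneg _), ← Real.sqrt_sq (norm_nonneg (toLp 2 w)),
      ← Real.sqrt_mul' _ (sq_nonneg _)]
    refine Real.sqrt_le_sqrt ?_
    calc ‖∑ i, c i • v i‖ ^ 2 = ⟪toLp 2 w, toLp 2 c⟫ := by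
          rw [← real_inner_self_eq_norm_sq, inner_sum_smul_sum_smul, hc,
            EuclideanSpace.inner_toLp_toLp, star_trivial]
      _ ≤ ‖toLp 2 w‖ * (C * ‖toLp 2 w‖) :=
          (real_inner_le_norm _ _).trans (by gcongr; exact hC w)
      _ = C * ‖toLp 2 w‖ ^ 2 := by ring
  have hsq : ‖toLp 2 w‖ ^ 2 ≤ √C * ‖toLp 2 w‖ * ‖∑ i, w i • v i‖ :=
    calc ‖toLp 2 w‖ ^ 2 = ⟪∑ i, w i • v i, ∑ i, c i • v i⟫ := by
          rw [inner_sum_smul_sum_smul, hc, ← real_inner_self_eq_norm_sq,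
            EuclideanSpace.inner_toLp_toLp, star_trivial]
      _ ≤ ‖∑ i, w i • v i‖ * ‖∑ i, c i • v i‖ := real_inner_le_norm _ _
      _ ≤ ‖∑ i, w i • v i‖ * (√C * ‖toLp 2 w‖) := by gcongr
      _ = √C * ‖toLp 2 w‖ * ‖∑ i, w i • v i‖ := by ring
  nlinarith [norm_nonneg (toLp 2 w),
    mul_nonneg (Real.sqrt_nonneg C) (norm_nonneg (∑ i, w i • v i))]

theorem sSup_abs_inner_div_sqrt_sum_inner_sq [DecidableEq ι] (hG : IsUnit (gram ℝ v).det)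
    (y : H) :
    sSup {r : ℝ | ∃ f ∈ Submodule.span ℝ (Set.range v), f ≠ 0 ∧
      r = |⟪f, y⟫| / √(∑ j, ⟪f, v j⟫ ^ 2)} =
      ‖toLp 2 ((gram ℝ v)⁻¹ *ᵥ fun i => ⟪v i, y⟫)‖ := by
  set G := gram ℝ v
  set w := G⁻¹ *ᵥ fun i => ⟪v i, y⟫
  have hw : G *ᵥ w = fun i => ⟪v i, y⟫ := mulVec_nonsing_inv_mulVec hG _
  have ratio_eq (c : ι → ℝ) : |⟪∑ i, c i • v i, y⟫| / √(∑ j, ⟪∑ i, c i • v i, v j⟫ ^ 2) =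
      |⟪toLp 2 (G *ᵥ c), toLp 2 w⟫| / ‖toLp 2 (G *ᵥ c)‖ := by
    rw [inner_sum_smul_eq_inner_sum_smul_of_gram_mulVec_eq hw, real_inner_comm,
      inner_sum_smul_sum_smul, EuclideanSpace.inner_toLp_toLp, star_trivial,
      EuclideanSpace.norm_toLp_eq_sqrt_sum_sq]
    simp only [inner_sum_smul_left_eq_gram_mulVec, G]
  rw [← sSup_abs_inner_div_norm (toLp 2 w)]
  congr 1
  ext r
  constructor
  · rintro ⟨f, hf, hf0, rfl⟩
    obtain ⟨c, rfl⟩ := (Submodule.mem_span_range_iff_exists_fun ℝ).1 hf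
    refine ⟨toLp 2 (G *ᵥ c), fun hGc => hf0 ?_, ratio_eq c⟩
    rw [← inner_self_eq_zero (𝕜 := ℝ), inner_sum_smul_sum_smul, ← ofLp_toLp 2 (G *ᵥ c), hGc]
    simp
  · rintro ⟨u, hu, rfl⟩
    set c := G⁻¹ *ᵥ ofLp u
    have hc : G *ᵥ c = ofLp u := mulVec_nonsing_inv_mulVec hG _
    refine ⟨∑ i, c i • v i, (Submodule.mem_span_range_iff_exists_fun ℝ).2 ⟨c, rfl⟩,
      fun hTc => hu ?_, by rw [ratio_eq, hc, toLp_ofLp]⟩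
    ext j
    rw [← hc, ← inner_sum_smul_left_eq_gram_mulVec, hTc, inner_zero_left]
    rfl

end GramMatrix

theorem kernel_interpolation_vector_l2_bound_general
    {n : ℕ}
    (Ω : Set (EuclideanSpace ℝ (Fin n)))
    {H : Type*} [NormedAddCommGroup H] [InnerProductSpace ℝ H]
    (ev : H →ₗ[ℝ] (EuclideanSpace ℝ (Fin n) → ℝ))
    (Φ : EuclideanSpace ℝ (Fin n) → H)
    (hrepr : ∀ (f : H), ∀ x ∈ Ω, ev f x = ⟪f, Φ x⟫)
    (Mk : ℝ) (hMk : ∀ x ∈ Ω, ∀ y ∈ Ω, |⟪Φ x, Φ y⟫| ≤ Mk)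
    (d : ℕ) (x : Fin d → EuclideanSpace ℝ (Fin n))
    (hxΩ : ∀ i, x i ∈ Ω)
    (hKXpos : (kerMatrix Φ d x).PosDef)
    -- `Cop` is the spectral norm of `K_X⁻¹` (any upper bound suffices)
    (Cop : ℝ)
    (hCop : ∀ v : Fin d → ℝ,
      Real.sqrt (∑ i, (((kerMatrix Φ d x)⁻¹ *ᵥ v) i) ^ 2) ≤
        Cop * Real.sqrt (∑ i, (v i) ^ 2))
    (xx : EuclideanSpace ℝ (Fin n)) (hxx : xx ∈ Ω) :
    Real.sqrt (∑ i, (((kerMatrix Φ d x)⁻¹ *ᵥ kerVec Φ d x xx) i) ^ 2) =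
      sSup {r : ℝ | ∃ f : H,
        f ∈ Submodule.span ℝ (Set.range fun i => Φ (x i)) ∧ f ≠ 0 ∧
        r = |ev f xx| / Real.sqrt (∑ j, (ev f (x j)) ^ 2)} ∧
    Real.sqrt (∑ i, (((kerMatrix Φ d x)⁻¹ *ᵥ kerVec Φ d x xx) i) ^ 2) ≤
      Real.sqrt Mk * Real.sqrt Cop := by
  set v : Fin d → H := fun i => Φ (x i)
  have hG : IsUnit (gram ℝ v).det := (isUnit_iff_isUnit_det _).1 hKXpos.isUnit
  have hC (u : Fin d → ℝ) : ‖toLp 2 ((gram ℝ v)⁻¹ *ᵥ u)‖ ≤ Cop * ‖toLp 2 u‖ := by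
    simp only [EuclideanSpace.norm_toLp_eq_sqrt_sum_sq]
    exact hCop u
  have hΦxx : ‖Φ xx‖ ≤ √Mk := Real.le_sqrt_of_sq_le <|
    (real_inner_self_eq_norm_sq (Φ xx)).symm.trans_le ((le_abs_self _).trans (hMk xx hxx xx hxx))
  rw [← EuclideanSpace.norm_toLp_eq_sqrt_sum_sq]
  simp only [hrepr _ _ hxx, hrepr _ _ (hxΩ _)]
  refine ⟨(sSup_abs_inner_div_sqrt_sum_inner_sq hG (Φ xx)).symm, ?_⟩
  set w := (gram ℝ v)⁻¹ *ᵥ fun i => ⟪v i, Φ xx⟫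
  calc _ ≤ √Cop * ‖∑ i, w i • v i‖ := norm_toLp_le_sqrt_mul_norm_sum_smul hG hC w
    _ ≤ √Cop * √Mk := by
        gcongr
        exact (norm_sum_smul_le_of_gram_mulVec_eq (mulVec_nonsing_inv_mulVec hG _)).trans hΦxx
    _ = √Mk * √Cop := mul_comm _ _

/-- For every `x ∈ Ω`,
`‖K_X⁻¹ k_X(x)‖₂ = sup{ |f(x)|/‖f_X‖₂ : f ∈ V_X, f ≠ 0 } ≤ ‖k‖_∞^{1/2} · ‖K_X⁻¹‖_{2→2}^{1/2}`,
where `Cop` is (a bound for) the spectral norm of `K_X⁻¹`. -/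
theorem kernel_interpolation_vector_l2_bound
    {n : ℕ}
    (Ω : Set (EuclideanSpace ℝ (Fin n)))
    (hΩne : Ω.Nonempty) (hΩopen : IsOpen Ω) (hΩbdd : Bornology.IsBounded Ω)
    {H : Type*} [NormedAddCommGroup H] [InnerProductSpace ℝ H] [CompleteSpace H]
    (ev : H →ₗ[ℝ] (EuclideanSpace ℝ (Fin n) → ℝ))
    (Φ : EuclideanSpace ℝ (Fin n) → H)
    (hrepr : ∀ (f : H), ∀ x ∈ Ω, ev f x = ⟪f, Φ x⟫)
    (hΦcont : ContinuousOn Φ Ω)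
    (Mk : ℝ) (hMk : ∀ x ∈ Ω, ∀ y ∈ Ω, |⟪Φ x, Φ y⟫| ≤ Mk)
    (d : ℕ) (hd : 1 ≤ d) (x : Fin d → EuclideanSpace ℝ (Fin n))
    (hxΩ : ∀ i, x i ∈ Ω) (hxinj : Function.Injective x)
    (hKXpos : (kerMatrix Φ d x).PosDef)
    -- `Cop` is the spectral norm of `K_X⁻¹` (any upper bound suffices)
    (Cop : ℝ)
    (hCop : ∀ v : Fin d → ℝ,
      Real.sqrt (∑ i, (((kerMatrix Φ d x)⁻¹ *ᵥ v) i) ^ 2) ≤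
        Cop * Real.sqrt (∑ i, (v i) ^ 2))
    (xx : EuclideanSpace ℝ (Fin n)) (hxx : xx ∈ Ω) :
    Real.sqrt (∑ i, (((kerMatrix Φ d x)⁻¹ *ᵥ kerVec Φ d x xx) i) ^ 2) =
      sSup {r : ℝ | ∃ f : H,
        f ∈ Submodule.span ℝ (Set.range fun i => Φ (x i)) ∧ f ≠ 0 ∧
        r = |ev f xx| / Real.sqrt (∑ j, (ev f (x j)) ^ 2)} ∧
    Real.sqrt (∑ i, (((kerMatrix Φ d x)⁻¹ *ᵥ kerVec Φ d x xx) i) ^ 2) ≤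
      Real.sqrt Mk * Real.sqrt Cop :=
  kernel_interpolation_vector_l2_bound_general Ω ev Φ hrepr Mk hMk d x hxΩ hKXpos Cop hCop xx hxx

end
end
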